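/- arXiv:1212.2772 — 6 statements merged into one kernel-verified Lean document; each statement's English description precedes it below -/
import Mathlib

section
/- Let ξ1, ξ2, ξ3 be independent real-valued random variables with nondegenerate distributions μ1, μ2, μ3, and let a1, a2, b1, b2 be nonzero real constants. If the linear statistics L1 = ξ1 + ξ2 + ξ3, L2 = a1ξ1 + a2ξ2 + ξ3 and L3 = b1ξ1 + b2ξ2 + ξ3 are independent, then: (1) a1 b2 − a1 a2 b2 − a1 b1 b2 − a2 b1 + a1 a2 b1 + a2 b1 b2 = 0; (2) the quadruple of signs (sgn a1, sgn a2, sgn b1, sgn b2) is one of (+,−,−,+), (+,−,−,−), (−,+,+,−), (−,+,−,−), (−,−,+,−), (−,−,−,+); (3) a1 ≠ a2 and b1 ≠ b2; (4) a2 b1 − a1 b2 ≠ 0; (5) (a1 − 1)(b2 − 1) − (a2 − 1)(b1 − 1) ≠ 0. -/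
open MeasureTheory ProbabilityTheory Complex Filter

noncomputable section

set_option linter.unusedSectionVars false

namespace SDproof

variable {Ω : Type*} [MeasureSpace Ω] [IsProbabilityMeasure (ℙ : Measure Ω)]

/-- characteristic function of a real random variable -/
def cf (X : Ω → ℝ) (t : ℝ) : ℂ := ∫ ω, Complex.exp ((t * X ω : ℝ) * Complex.I) ∂ℙ

lemma measurable_integrand {X : Ω → ℝ} (hm : Measurable X) (t : ℝ) :
    Measurable fun ω => Complex.exp ((t * X ω : ℝ) * Complex.I) := by fun_prop

lemma integrable_integrand {X : Ω → ℝ} (hm : Measurable X) (t : ℝ) :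
    Integrable (fun ω => Complex.exp ((t * X ω : ℝ) * Complex.I)) ℙ := by
  refine (integrable_const (1 : ℝ)).mono' (measurable_integrand hm t).aestronglyMeasurable ?_
  filter_upwards with ω
  rw [Complex.norm_exp_ofReal_mul_I]

lemma cf_zero {X : Ω → ℝ} : cf X 0 = 1 := by
  simp [cf]

lemma norm_cf_le_one {X : Ω → ℝ} (t : ℝ) : ‖cf X t‖ ≤ 1 := by
  refine le_trans (norm_integral_le_integral_norm _) ?_
  have h : (fun ω => ‖Complex.exp ((t * X ω : ℝ) * Complex.I)‖) = fun _ => (1:ℝ) := by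
    funext ω; rw [Complex.norm_exp_ofReal_mul_I]
  rw [h]; simp

lemma continuous_cf {X : Ω → ℝ} (hm : Measurable X) : Continuous (cf X) := by
  apply continuous_of_dominated (bound := fun _ => (1:ℝ))
  · exact fun t => (measurable_integrand hm t).aestronglyMeasurable
  · intro t; filter_upwards with ω; rw [Complex.norm_exp_ofReal_mul_I]
  · exact integrable_const 1
  · filter_upwards with ω
    have : Continuous fun t : ℝ => ((t * X ω : ℝ) : ℂ) * Complex.I := by fun_prop
    exact Complex.continuous_exp.comp this

lemma indep_integral_mul {β γ : Type*} [MeasurableSpace β] [MeasurableSpace γ]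
    {X : Ω → β} {Y : Ω → γ} (h : IndepFun X Y ℙ) (hX : Measurable X) (hY : Measurable Y)
    {F : β → ℂ} {G : γ → ℂ} (hF : Measurable F) (hG : Measurable G) :
    ∫ ω, F (X ω) * G (Y ω) ∂ℙ = (∫ ω, F (X ω) ∂ℙ) * ∫ ω, G (Y ω) ∂ℙ := by
  haveI := Measure.isProbabilityMeasure_map (μ := ℙ) hX.aemeasurable
  haveI := Measure.isProbabilityMeasure_map (μ := ℙ) hY.aemeasurable
  have hmap := (indepFun_iff_map_prod_eq_prod_map_map hX.aemeasurable hY.aemeasurable).mp h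
  have hXY : AEMeasurable (fun ω => (X ω, Y ω)) ℙ := (hX.prodMk hY).aemeasurable
  have h1 : ∫ ω, F (X ω) * G (Y ω) ∂ℙ
      = ∫ p : β × γ, F p.1 * G p.2 ∂(Measure.map (fun ω => (X ω, Y ω)) ℙ) :=
    (integral_map hXY
      ((hF.comp measurable_fst).mul (hG.comp measurable_snd)).aestronglyMeasurable).symm
  rw [h1, hmap, integral_prod_mul, integral_map hX.aemeasurable hF.aestronglyMeasurable,
    integral_map hY.aemeasurable hG.aestronglyMeasurable]


lemma linear_of_additive {f : ℝ → ℝ} (hf : Continuous f) (h : ∀ x y, f (x + y) = f x + f y) :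
    ∀ x, f x = f 1 * x := by
  intro x
  let F : ℝ →+ ℝ := AddMonoidHom.mk' f h
  have hF : Continuous F := hf
  have := map_real_smul F hF x 1
  simpa [F, smul_eq_mul, mul_comm] using this

lemma exp_ofReal_add (x y : ℝ) :
    Complex.exp ((x + y : ℝ) * Complex.I)
      = Complex.exp ((x : ℝ) * Complex.I) * Complex.exp ((y : ℝ) * Complex.I) := by
  rw [← Complex.exp_add]
  congr 1
  push_cast
  ring

lemma cf_add_three {f1 f2 f3 : Ω → ℝ} (hmf1 : Measurable f1) (hmf2 : Measurable f2)
    (hmf3 : Measurable f3)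
    (h : iIndepFun ![f1, f2, f3] ℙ) (c1 c2 c3 : ℝ) :
    ∫ ω, Complex.exp ((c1 * f1 ω + c2 * f2 ω + c3 * f3 ω : ℝ) * Complex.I) ∂ℙ
      = cf f1 c1 * cf f2 c2 * cf f3 c3 := by
  have hmeas : ∀ i, Measurable (![f1, f2, f3] i) := by
    intro i; fin_cases i <;> assumption
  have h12_3 : IndepFun (fun ω => (f1 ω, f2 ω)) f3 ℙ := by
    have := h.indepFun_prodMk hmeas 0 1 2 (by decide) (by decide)
    simpa using this
  have h1_2 : IndepFun f1 f2 ℙ := by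
    have := h.indepFun (i := 0) (j := 1) (by decide)
    simpa using this
  have step1 : ∫ ω, Complex.exp ((c1 * f1 ω + c2 * f2 ω + c3 * f3 ω : ℝ) * Complex.I) ∂ℙ
      = (∫ ω, Complex.exp ((c1 * f1 ω + c2 * f2 ω : ℝ) * Complex.I) ∂ℙ)
        * ∫ ω, Complex.exp ((c3 * f3 ω : ℝ) * Complex.I) ∂ℙ := by
    have e1 : (fun ω => Complex.exp ((c1 * f1 ω + c2 * f2 ω + c3 * f3 ω : ℝ) * Complex.I))
        = fun ω => (fun p : ℝ × ℝ => Complex.exp ((c1 * p.1 + c2 * p.2 : ℝ) * Complex.I))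
            ((f1 ω, f2 ω))
          * (fun x : ℝ => Complex.exp ((c3 * x : ℝ) * Complex.I)) (f3 ω) := by
      funext ω
      simp only
      rw [← exp_ofReal_add]
    rw [e1]
    exact indep_integral_mul h12_3 (hmf1.prodMk hmf2) hmf3
      (F := fun p : ℝ × ℝ => Complex.exp ((c1 * p.1 + c2 * p.2 : ℝ) * Complex.I))
      (G := fun x : ℝ => Complex.exp ((c3 * x : ℝ) * Complex.I)) (by fun_prop) (by fun_prop)
  have step2 : ∫ ω, Complex.exp ((c1 * f1 ω + c2 * f2 ω : ℝ) * Complex.I) ∂ℙ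
      = (∫ ω, Complex.exp ((c1 * f1 ω : ℝ) * Complex.I) ∂ℙ)
        * ∫ ω, Complex.exp ((c2 * f2 ω : ℝ) * Complex.I) ∂ℙ := by
    have e1 : (fun ω => Complex.exp ((c1 * f1 ω + c2 * f2 ω : ℝ) * Complex.I))
        = fun ω => (fun x : ℝ => Complex.exp ((c1 * x : ℝ) * Complex.I)) (f1 ω)
          * (fun x : ℝ => Complex.exp ((c2 * x : ℝ) * Complex.I)) (f2 ω) := by
      funext ω
      simp only
      rw [← exp_ofReal_add]
    rw [e1]
    exact indep_integral_mul h1_2 hmf1 hmf2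
      (F := fun x : ℝ => Complex.exp ((c1 * x : ℝ) * Complex.I))
      (G := fun x : ℝ => Complex.exp ((c2 * x : ℝ) * Complex.I)) (by fun_prop) (by fun_prop)
  rw [step1, step2]
  rfl


lemma conj_exp_ofReal_mul_I (x : ℝ) :
    (starRingEnd ℂ) (Complex.exp ((x : ℝ) * Complex.I)) = Complex.exp ((-x : ℝ) * Complex.I) := by
  rw [← Complex.exp_conj]
  congr 1
  simp

lemma dirac_of_atom {μ : Measure ℝ} [IsProbabilityMeasure μ] {c : ℝ} (h : μ {c} = 1) :
    μ = Measure.dirac c := by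
  ext s hs
  rw [Measure.dirac_apply' _ hs]
  by_cases hc : c ∈ s
  · have h1 : μ s ≤ 1 := prob_le_one
    have h2 : (1 : ENNReal) ≤ μ s := h ▸ measure_mono (Set.singleton_subset_iff.mpr hc)
    simp [Set.indicator_of_mem hc, le_antisymm h1 h2]
  · have hsub : s ⊆ ({c} : Set ℝ)ᶜ := fun x hx hxc => by
      rw [Set.mem_singleton_iff] at hxc
      exact hc (hxc ▸ hx)
    have h2 : μ s ≤ μ (({c} : Set ℝ)ᶜ) := measure_mono hsub
    rw [prob_compl_eq_one_sub (measurableSet_singleton c), h] at h2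
    simp only [tsub_self] at h2
    simp [Set.indicator_of_notMem hc, le_antisymm h2 zero_le]

lemma dirac_of_cf_norm_one {X : Ω → ℝ} (hm : Measurable X) (h : ∀ t, ‖cf X t‖ = 1) :
    ∃ c, Measure.map X ℙ = Measure.dirac c := by
  set μ := Measure.map X ℙ with hμ
  haveI : IsProbabilityMeasure μ := Measure.isProbabilityMeasure_map hm.aemeasurable
  have hcf : ∀ t : ℝ, cf X t = ∫ x : ℝ, Complex.exp ((t * x : ℝ) * Complex.I) ∂μ := by
    intro t
    rw [cf, hμ, integral_map hm.aemeasurable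
      (by fun_prop : Measurable fun x : ℝ => Complex.exp ((t * x : ℝ) * Complex.I)).aestronglyMeasurable]
  have hcos : ∀ t : ℝ, ∫ p : ℝ × ℝ, Real.cos (t * (p.1 - p.2)) ∂(μ.prod μ) = 1 := by
    intro t
    have hconj : (starRingEnd ℂ) (cf X t)
        = ∫ x : ℝ, Complex.exp ((-(t * x) : ℝ) * Complex.I) ∂μ := by
      rw [hcf t, ← integral_conj]
      congr 1
      funext x
      exact conj_exp_ofReal_mul_I _
    have hsq : (cf X t) * (starRingEnd ℂ) (cf X t)
        = ∫ p : ℝ × ℝ, Complex.exp ((t * (p.1 - p.2) : ℝ) * Complex.I) ∂(μ.prod μ) := by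
      rw [hconj, hcf t,
        ← integral_prod_mul (f := fun x : ℝ => Complex.exp ((t * x : ℝ) * Complex.I))
          (g := fun y : ℝ => Complex.exp ((-(t * y) : ℝ) * Complex.I))]
      congr 1
      funext p
      rw [← exp_ofReal_add]
      congr 2
      ring
    have hone : (cf X t) * (starRingEnd ℂ) (cf X t) = 1 := by
      rw [Complex.mul_conj]
      norm_cast
      rw [← Complex.sq_norm, h t]
      norm_num
    have hint : Integrable (fun p : ℝ × ℝ => Complex.exp ((t * (p.1 - p.2) : ℝ) * Complex.I))
        (μ.prod μ) := by
      refine (integrable_const (1 : ℝ)).mono'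
        ((by fun_prop : Measurable fun p : ℝ × ℝ =>
          Complex.exp ((t * (p.1 - p.2) : ℝ) * Complex.I)).aestronglyMeasurable) ?_
      filter_upwards with p
      rw [Complex.norm_exp_ofReal_mul_I]
    have hre := integral_re hint
    rw [← hsq, hone] at hre
    have : ∀ p : ℝ × ℝ, (Complex.exp ((t * (p.1 - p.2) : ℝ) * Complex.I)).re
        = Real.cos (t * (p.1 - p.2)) := fun p => Complex.exp_ofReal_mul_I_re _
    simp only [RCLike.re_to_complex, Complex.one_re] at hre
    rw [← hre]
    congr 1
    funext p
    exact (this p).symm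
  have hae : ∀ t : ℝ, ∀ᵐ p ∂(μ.prod μ), Real.cos (t * (p.1 - p.2)) = 1 := by
    intro t
    have hmeas : Measurable fun p : ℝ × ℝ => Real.cos (t * (p.1 - p.2)) := by fun_prop
    have hcint : Integrable (fun p : ℝ × ℝ => Real.cos (t * (p.1 - p.2))) (μ.prod μ) := by
      refine (integrable_const (1 : ℝ)).mono' hmeas.aestronglyMeasurable ?_
      filter_upwards with p
      rw [Real.norm_eq_abs]
      exact Real.abs_cos_le_one _
    have hint : Integrable (fun p : ℝ × ℝ => 1 - Real.cos (t * (p.1 - p.2))) (μ.prod μ) :=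
      (integrable_const 1).sub hcint
    have hzero : ∫ p : ℝ × ℝ, (1 - Real.cos (t * (p.1 - p.2))) ∂(μ.prod μ) = 0 := by
      rw [integral_sub (integrable_const 1) hcint, hcos t]
      simp
    have hnn : 0 ≤ᵐ[μ.prod μ] fun p : ℝ × ℝ => 1 - Real.cos (t * (p.1 - p.2)) := by
      filter_upwards with p
      have := Real.cos_le_one (t * (p.1 - p.2))
      simp only [Pi.zero_apply]
      linarith
    have := (integral_eq_zero_iff_of_nonneg_ae hnn hint).mp hzero
    filter_upwards [this] with p hp
    have : (1 : ℝ) - Real.cos (t * (p.1 - p.2)) = 0 := hp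
    linarith
  have hdiag : ∀ᵐ p ∂(μ.prod μ), p.1 = p.2 := by
    filter_upwards [hae 1, hae (Real.sqrt 2)] with p e1 e2
    obtain ⟨n, hn⟩ := (Real.cos_eq_one_iff _).mp e1
    obtain ⟨m, hm⟩ := (Real.cos_eq_one_iff _).mp e2
    simp only [one_mul] at hn
    by_contra hne
    have hd : p.1 - p.2 ≠ 0 := sub_ne_zero.mpr hne
    have hn0 : (n : ℝ) ≠ 0 := by
      intro h0
      rw [h0, zero_mul] at hn
      exact hd hn.symm
    have hπ : (2 * Real.pi) ≠ 0 := by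
      have := Real.pi_ne_zero; positivity
    have hcancel : (m : ℝ) = Real.sqrt 2 * (n : ℝ) := by
      rw [← hn] at hm
      have h2 : (m : ℝ) * (2 * Real.pi) = (Real.sqrt 2 * (n : ℝ)) * (2 * Real.pi) := by
        rw [hm]; ring
      exact mul_right_cancel₀ hπ h2
    have hrat : Real.sqrt 2 = (m : ℝ) / (n : ℝ) := by
      rw [hcancel]
      field_simp
    have : ¬ Irrational ((m : ℝ) / (n : ℝ)) := by
      rw [show ((m : ℝ) / (n : ℝ)) = (((m : ℚ) / (n : ℚ) : ℚ) : ℝ) by push_cast; ring_nf]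
      exact Rat.not_irrational _
    exact this (hrat ▸ irrational_sqrt_two)
  have hD : MeasurableSet {p : ℝ × ℝ | p.1 = p.2} :=
    measurableSet_eq_fun measurable_fst measurable_snd
  have hfull : (μ.prod μ) {p : ℝ × ℝ | p.1 = p.2} = 1 := by
    have hc0 : (μ.prod μ) ({p : ℝ × ℝ | p.1 = p.2}ᶜ) = 0 := by
      have := ae_iff.mp hdiag
      convert this using 2
      rfl
    have h1 := prob_compl_eq_one_sub (μ := μ.prod μ) hD
    rw [hc0] at h1
    have hle : (μ.prod μ) {p : ℝ × ℝ | p.1 = p.2} ≤ 1 := prob_le_one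
    exact le_antisymm hle (by rwa [eq_comm, tsub_eq_zero_iff_le] at h1)
  have hmeasf : Measurable fun x : ℝ => μ {x} := by
    have h0 : Measurable fun x : ℝ => μ (Prod.mk x ⁻¹' {p : ℝ × ℝ | p.1 = p.2}) :=
      measurable_measure_prodMk_left hD
    have : (fun x : ℝ => μ (Prod.mk x ⁻¹' {p : ℝ × ℝ | p.1 = p.2})) = fun x : ℝ => μ {x} := by
      funext x
      congr 1
      ext y
      simp [eq_comm]
    rwa [this] at h0
  have hkey : ∫⁻ x, μ {x} ∂μ = 1 := by
    rw [← hfull, Measure.prod_apply hD]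
    congr 1
    funext x
    congr 1
    ext y
    simp [eq_comm]
  have hle : ∀ x : ℝ, μ {x} ≤ 1 := fun x => prob_le_one
  have hsub : ∫⁻ x, (1 - μ {x}) ∂μ = 0 := by
    rw [lintegral_sub hmeasf (by rw [hkey]; exact ENNReal.one_ne_top) (ae_of_all _ hle)]
    simp [hkey]
  have hae1 : ∀ᵐ x ∂μ, (1 : ENNReal) - μ {x} = 0 :=
    (lintegral_eq_zero_iff (measurable_const.sub hmeasf)).mp hsub
  haveI : (ae μ).NeBot := ae_neBot.mpr (IsProbabilityMeasure.ne_zero μ)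
  obtain ⟨x, hx⟩ := hae1.exists
  refine ⟨x, dirac_of_atom (le_antisymm (hle x) (tsub_eq_zero_iff_le.mp hx))⟩

lemma dirac_of_selfIndep {X : Ω → ℝ} (hm : Measurable X) (h : IndepFun X X ℙ) :
    ∃ c, Measure.map X ℙ = Measure.dirac c := by
  apply dirac_of_cf_norm_one hm
  intro t
  have hsplit := indep_integral_mul h hm hm
    (F := fun x : ℝ => Complex.exp ((t * x : ℝ) * Complex.I))
    (G := fun x : ℝ => Complex.exp ((-(t * x) : ℝ) * Complex.I)) (by fun_prop) (by fun_prop)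
  have hL : ∫ ω, Complex.exp ((t * X ω : ℝ) * Complex.I)
      * Complex.exp ((-(t * X ω) : ℝ) * Complex.I) ∂ℙ = 1 := by
    have hfun : (fun ω => Complex.exp ((t * X ω : ℝ) * Complex.I)
        * Complex.exp ((-(t * X ω) : ℝ) * Complex.I)) = fun _ => (1 : ℂ) := by
      funext ω
      rw [← exp_ofReal_add]
      norm_num
    rw [hfun]
    simp
  have hconj : ∫ ω, Complex.exp ((-(t * X ω) : ℝ) * Complex.I) ∂ℙ = (starRingEnd ℂ) (cf X t) := by
    rw [cf, ← integral_conj]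
    congr 1
    funext ω
    exact (conj_exp_ofReal_mul_I _).symm
  have hone : cf X t * (starRingEnd ℂ) (cf X t) = 1 := by
    rw [← hconj]
    rw [hL] at hsplit
    exact hsplit.symm
  have hsq : Complex.normSq (cf X t) = 1 := by
    have := Complex.mul_conj (cf X t)
    rw [hone] at this
    exact_mod_cast this.symm
  have hn2 : ‖cf X t‖ ^ 2 = 1 := by
    rw [Complex.sq_norm]
    exact hsq
  nlinarith [norm_nonneg (cf X t)]

lemma dirac_of_indep_eq {β : Type*} [MeasurableSpace β] {X : Ω → ℝ} {W : Ω → β}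
    (hmX : Measurable X) (h : IndepFun X W ℙ) {g : β → ℝ} (hg : Measurable g)
    (heq : X =ᵐ[ℙ] fun ω => g (W ω)) :
    ∃ c, Measure.map X ℙ = Measure.dirac c := by
  have h2 : IndepFun X (fun ω => g (W ω)) ℙ := h.comp measurable_id hg
  have h3 : IndepFun X X ℙ := h2.congr (EventuallyEq.refl _ _) heq.symm
  exact dirac_of_selfIndep hmX h3

lemma ae_const_of_map_dirac {X : Ω → ℝ} (hm : Measurable X) {c : ℝ}
    (h : Measure.map X ℙ = Measure.dirac c) : X =ᵐ[ℙ] fun _ => c := by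
  have : ℙ (X ⁻¹' {c}) = 1 := by
    rw [← Measure.map_apply hm (measurableSet_singleton c), h]
    simp
  have hcompl : ℙ (X ⁻¹' {c})ᶜ = 0 := by
    rw [prob_compl_eq_one_sub (hm (measurableSet_singleton c)), this]
    simp
  have hset : {ω | ¬ X ω = c} = (X ⁻¹' {c})ᶜ := by
    ext ω
    simp
  rw [Filter.EventuallyEq, ae_iff]
  convert hcompl using 1
  rw [hset]


lemma no_zero_aux {ρ1 ρ2 ρ3 : ℝ → ℝ} {c1 c2 c3 : ℝ} (hc1 : c1 ≠ 0) (hc2 : c2 ≠ 0) (hc3 : c3 ≠ 0)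
    (hP : ∀ s t, ρ1 (s + c1*t) * ρ2 (s + c2*t) * ρ3 (s + c3*t)
      = (ρ1 s * ρ2 s * ρ3 s) * (ρ1 (c1*t) * ρ2 (c2*t) * ρ3 (c3*t)))
    {u : ℝ} (hu : u ≠ 0)
    (hfac : ∀ x, |x| < |u| → (ρ1 x ≠ 0 ∧ ρ2 x ≠ 0 ∧ ρ3 x ≠ 0)) : ρ1 u ≠ 0 := by
  have habs1 : 0 < |c1| := abs_pos.mpr hc1
  have habs2 : 0 < |c2| := abs_pos.mpr hc2
  have habs3 : 0 < |c3| := abs_pos.mpr hc3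
  have habsu : 0 < |u| := abs_pos.mpr hu
  set θ : ℝ := min 1 (min (|c1|/|c2|) (|c1|/|c3|)) / 2 with hθdef
  have hθpos : 0 < θ := by
    apply div_pos _ two_pos
    exact lt_min one_pos (lt_min (div_pos habs1 habs2) (div_pos habs1 habs3))
  have hθle1 : θ ≤ 1/2 := by
    rw [hθdef]
    gcongr
    exact min_le_left _ _
  have hθle2 : θ * |c2| ≤ |c1| / 2 := by
    have h1 : θ ≤ (|c1|/|c2|) / 2 := by
      rw [hθdef]
      gcongr
      exact le_trans (min_le_right _ _) (min_le_left _ _)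
    calc θ * |c2| ≤ ((|c1|/|c2|)/2) * |c2| := by nlinarith
      _ = |c1| / 2 := by field_simp <;> ring
  have hθle3 : θ * |c3| ≤ |c1| / 2 := by
    have h1 : θ ≤ (|c1|/|c3|) / 2 := by
      rw [hθdef]
      gcongr
      exact le_trans (min_le_right _ _) (min_le_right _ _)
    calc θ * |c3| ≤ ((|c1|/|c3|)/2) * |c3| := by nlinarith
      _ = |c1| / 2 := by field_simp <;> ring
  set t : ℝ := θ * u / c1 with htdef
  set s : ℝ := (1 - θ) * u with hsdef
  have ht_abs : |t| = θ * |u| / |c1| := by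
    rw [htdef, abs_div, abs_mul, abs_of_pos hθpos]
  have e1 : s + c1 * t = u := by
    rw [hsdef, htdef]
    field_simp
    ring
  have hs : |s| < |u| := by
    rw [hsdef, abs_mul, abs_of_pos (by linarith : (0:ℝ) < 1 - θ)]
    nlinarith [mul_pos hθpos habsu]
  have hc1t : |c1 * t| < |u| := by
    rw [abs_mul, ht_abs]
    rw [show |c1| * (θ * |u| / |c1|) = θ * |u| from by field_simp <;> ring]
    nlinarith [mul_le_mul_of_nonneg_right hθle1 (le_of_lt habsu)]
  have hc2t : |c2 * t| < |u| := by
    rw [abs_mul, ht_abs]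
    have : |c2| * (θ * |u| / |c1|) = (θ * |c2|) * |u| / |c1| := by ring
    rw [this]
    rw [div_lt_iff₀ habs1]
    nlinarith [mul_le_mul_of_nonneg_right hθle2 (le_of_lt habsu), mul_pos habs1 habsu]
  have hc3t : |c3 * t| < |u| := by
    rw [abs_mul, ht_abs]
    have : |c3| * (θ * |u| / |c1|) = (θ * |c3|) * |u| / |c1| := by ring
    rw [this]
    rw [div_lt_iff₀ habs1]
    nlinarith [mul_le_mul_of_nonneg_right hθle3 (le_of_lt habsu), mul_pos habs1 habsu]
  have h2 := hP s t
  rw [e1] at h2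
  have hR : (ρ1 s * ρ2 s * ρ3 s) * (ρ1 (c1*t) * ρ2 (c2*t) * ρ3 (c3*t)) ≠ 0 := by
    obtain ⟨q1, q2, q3⟩ := hfac s hs
    obtain ⟨r1, _, _⟩ := hfac (c1*t) hc1t
    obtain ⟨_, r2, _⟩ := hfac (c2*t) hc2t
    obtain ⟨_, _, r3⟩ := hfac (c3*t) hc3t
    exact mul_ne_zero (mul_ne_zero (mul_ne_zero q1 q2) q3)
      (mul_ne_zero (mul_ne_zero r1 r2) r3)
  intro h0
  rw [h0, zero_mul, zero_mul] at h2
  exact hR h2.symm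

lemma no_zero {ρ1 ρ2 ρ3 : ℝ → ℝ} (hcon1 : Continuous ρ1) (hcon2 : Continuous ρ2)
    (hcon3 : Continuous ρ3)
    (h01 : ρ1 0 = 1) (h02 : ρ2 0 = 1) (h03 : ρ3 0 = 1)
    {c1 c2 c3 : ℝ} (hc1 : c1 ≠ 0) (hc2 : c2 ≠ 0) (hc3 : c3 ≠ 0)
    (hP : ∀ s t, ρ1 (s + c1*t) * ρ2 (s + c2*t) * ρ3 (s + c3*t)
      = (ρ1 s * ρ2 s * ρ3 s) * (ρ1 (c1*t) * ρ2 (c2*t) * ρ3 (c3*t))) :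
    ∀ u, ρ1 u ≠ 0 ∧ ρ2 u ≠ 0 ∧ ρ3 u ≠ 0 := by
  have hP2 : ∀ s t, ρ2 (s + c2*t) * ρ1 (s + c1*t) * ρ3 (s + c3*t)
      = (ρ2 s * ρ1 s * ρ3 s) * (ρ2 (c2*t) * ρ1 (c1*t) * ρ3 (c3*t)) := by
    intro s t
    linear_combination hP s t
  have hP3 : ∀ s t, ρ3 (s + c3*t) * ρ2 (s + c2*t) * ρ1 (s + c1*t)
      = (ρ3 s * ρ2 s * ρ1 s) * (ρ3 (c3*t) * ρ2 (c2*t) * ρ1 (c1*t)) := by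
    intro s t
    linear_combination hP s t
  set P : ℝ → ℝ := fun r => (ρ1 r * ρ2 r * ρ3 r) * (ρ1 (-r) * ρ2 (-r) * ρ3 (-r)) with hPdef
  have hPc : Continuous P := by
    apply Continuous.mul
    · exact ((hcon1.mul hcon2).mul hcon3)
    · exact (((hcon1.comp continuous_neg).mul (hcon2.comp continuous_neg)).mul
        (hcon3.comp continuous_neg))
  have hP0 : P 0 = 1 := by simp [hPdef, h01, h02, h03]
  -- main claim: P never vanishes
  have hPnz : ∀ r, P r ≠ 0 := by
    by_contra hcon
    push_neg at hcon
    obtain ⟨r0, hr0⟩ := hcon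
    set S : Set ℝ := {r | 0 ≤ r ∧ P r = 0} with hSdef
    have hSne : S.Nonempty := by
      rcases le_or_gt 0 r0 with hr | hr
      · exact ⟨r0, hr, hr0⟩
      · refine ⟨-r0, by linarith, ?_⟩
        rw [hPdef]
        simp only [neg_neg]
        rw [hPdef] at hr0
        linear_combination hr0
    have hSclosed : IsClosed S := by
      have : S = (Set.Ici 0) ∩ (P ⁻¹' {0}) := by
        ext r
        simp [hSdef, Set.mem_setOf_eq]
      rw [this]
      exact isClosed_Ici.inter (isClosed_singleton.preimage hPc)
    have hSbdd : BddBelow S := ⟨0, fun r hr => hr.1⟩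
    set R := sInf S with hRdef
    have hRmem : R ∈ S := hSclosed.csInf_mem hSne hSbdd
    have hRpos : 0 < R := by
      rcases hRmem with ⟨hR0, hRz⟩
      rcases lt_or_eq_of_le hR0 with h | h
      · exact h
      · exfalso
        rw [← h] at hRz
        rw [hP0] at hRz
        norm_num at hRz
    have hfac : ∀ x, |x| < |R| → (ρ1 x ≠ 0 ∧ ρ2 x ≠ 0 ∧ ρ3 x ≠ 0) := by
      intro x hx
      have hPx : P x ≠ 0 := by
        intro h0
        have hmem : |x| ∈ S := by
          constructor
          · exact abs_nonneg x
          · rcases abs_cases x with ⟨he, _⟩ | ⟨he, _⟩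
            · rw [he]; exact h0
            · rw [he, hPdef]
              simp only [neg_neg]
              rw [hPdef] at h0
              linear_combination h0
        have := csInf_le hSbdd hmem
        rw [abs_of_pos hRpos] at hx
        linarith
      refine ⟨fun h => hPx ?_, fun h => hPx ?_, fun h => hPx ?_⟩ <;>
        · rw [hPdef]
          simp [h]
    have hRne : R ≠ 0 := ne_of_gt hRpos
    have k1 : ρ1 R ≠ 0 := no_zero_aux hc1 hc2 hc3 hP hRne hfac
    have k2 : ρ2 R ≠ 0 := no_zero_aux hc2 hc1 hc3 hP2 hRne
      (fun x hx => ⟨(hfac x hx).2.1, (hfac x hx).1, (hfac x hx).2.2⟩)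
    have k3 : ρ3 R ≠ 0 := no_zero_aux hc3 hc2 hc1 hP3 hRne
      (fun x hx => ⟨(hfac x hx).2.2, (hfac x hx).2.1, (hfac x hx).1⟩)
    have hfacneg : ∀ x, |x| < |(-R)| → (ρ1 x ≠ 0 ∧ ρ2 x ≠ 0 ∧ ρ3 x ≠ 0) := by
      intro x hx
      apply hfac
      rwa [abs_neg] at hx
    have hRnegne : (-R) ≠ 0 := neg_ne_zero.mpr hRne
    have k1' : ρ1 (-R) ≠ 0 := no_zero_aux hc1 hc2 hc3 hP hRnegne hfacneg
    have k2' : ρ2 (-R) ≠ 0 := no_zero_aux hc2 hc1 hc3 hP2 hRnegne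
      (fun x hx => ⟨(hfacneg x hx).2.1, (hfacneg x hx).1, (hfacneg x hx).2.2⟩)
    have k3' : ρ3 (-R) ≠ 0 := no_zero_aux hc3 hc2 hc1 hP3 hRnegne
      (fun x hx => ⟨(hfacneg x hx).2.2, (hfacneg x hx).2.1, (hfacneg x hx).1⟩)
    have : P R ≠ 0 := by
      rw [hPdef]
      exact mul_ne_zero (mul_ne_zero (mul_ne_zero k1 k2) k3)
        (mul_ne_zero (mul_ne_zero k1' k2') k3')
    exact this hRmem.2
  intro u
  refine ⟨fun h => hPnz u ?_, fun h => hPnz u ?_, fun h => hPnz u ?_⟩ <;>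
    · rw [hPdef]
      simp [h]

lemma quadratic_of_funEq {ψ : ℝ → ℝ} (hc : Continuous ψ) (h0 : ψ 0 = 0) (hnn : ∀ x, 0 ≤ ψ x)
    {H1 H2 H3 : ℝ → ℝ} {e : ℝ} (he : e ≠ 0) {d1 d2 d3 : ℝ}
    (key : ∀ t x y, ψ (x + e*y + t) - ψ (x + e*y)
      = (H1 (x + t*d1) - H1 x) + (H2 (y + t*d2) - H2 y) + (H3 (t*d3) - H3 0)) :
    ∀ x, ψ x = (ψ 1) * x^2 := by
  have step2 : ∀ t u v, ψ (u + v + t) - ψ (u + v)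
      = (ψ (u + t) - ψ u) + (ψ (v + t) - ψ v) - ψ t := by
    intro t u v
    have k1 := key t u (v/e)
    have k2 := key t u 0
    have k3 := key t 0 (v/e)
    have k4 := key t 0 0
    have hev : e * (v/e) = v := by field_simp
    rw [hev] at k1 k3
    simp only [mul_zero, add_zero, zero_add] at k2 k3 k4
    have hψ0 : ψ 0 = 0 := h0
    linarith [k1, k2, k3, k4]
  have Klin : ∀ t x, ψ (x + t) - ψ x - ψ t = (ψ (1 + t) - ψ 1 - ψ t) * x := by
    intro t
    have hcont : Continuous fun x => ψ (x + t) - ψ x - ψ t := by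
      apply Continuous.sub
      apply Continuous.sub
      · exact hc.comp (continuous_id.add continuous_const)
      · exact hc
      · exact continuous_const
    have hadd : ∀ z w, ψ ((z + w) + t) - ψ (z + w) - ψ t
        = (ψ (z + t) - ψ z - ψ t) + (ψ (w + t) - ψ w - ψ t) := by
      intro z w
      have := step2 t z w
      linarith
    have := linear_of_additive (f := fun x => ψ (x + t) - ψ x - ψ t) hcont hadd
    intro x
    exact this x
  set κ : ℝ → ℝ := fun t => ψ (1 + t) - ψ 1 - ψ t with hκdef
  have hκlin : ∀ t, κ t = κ 1 * t := by
    intro t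
    have h1 := Klin t 1
    have h2 := Klin 1 t
    have he1 : ψ (1 + t) = ψ (t + 1) := by rw [add_comm]
    simp only [hκdef]
    rw [he1] at h1 ⊢
    linarith
  have hform : ∀ x, ψ x = (κ 1 / 2) * x^2 + (ψ 1 - κ 1 / 2) * x := by
    have hqc : Continuous fun x => ψ x - (κ 1 / 2) * x^2 := by
      apply Continuous.sub hc
      exact continuous_const.mul (continuous_pow 2)
    have hqadd : ∀ u t, (fun x => ψ x - (κ 1 / 2) * x^2) (u + t)
        = (fun x => ψ x - (κ 1 / 2) * x^2) u + (fun x => ψ x - (κ 1 / 2) * x^2) t := by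
      intro u t
      simp only
      have h1 := Klin t u
      have h2 := hκlin t
      simp only [hκdef] at h1 h2
      linear_combination h1 + u * h2
    have := linear_of_additive hqc hqadd
    intro x
    have hx := this x
    have h1 : ψ 1 - κ 1 / 2 * 1 ^ 2 = ψ 1 - κ 1 / 2 := by ring
    nlinarith [hx]
  have hB : ψ 1 - κ 1 / 2 = 0 := by
    by_contra hBne
    set A := κ 1 / 2 with hA
    set B := ψ 1 - κ 1 / 2 with hBdef
    have hbound : ∀ ε : ℝ, 0 < ε → |B| * ε ≤ |A| * ε^2 := by
      intro ε hε
      have hp := hnn ε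
      have hm := hnn (-ε)
      rw [hform ε] at hp
      rw [hform (-ε)] at hm
      have h1 : B * ε ≤ |A| * ε^2 := by nlinarith [le_abs_self A, neg_abs_le A]
      have h2 : -(B * ε) ≤ |A| * ε^2 := by nlinarith [le_abs_self A, neg_abs_le A]
      rcases abs_cases B with ⟨hB1, _⟩ | ⟨hB1, _⟩
      · rw [hB1]; nlinarith
      · rw [hB1]; nlinarith
    have hBpos : 0 < |B| := abs_pos.mpr hBne
    have hApos : 0 ≤ |A| := abs_nonneg A
    set ε := |B| / (2 * (|A| + 1)) with hε
    have hεpos : 0 < ε := div_pos hBpos (by positivity)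
    have := hbound ε hεpos
    have hεle : ε * (|A| + 1) ≤ |B| / 2 := by
      rw [hε]
      rw [div_mul_eq_mul_div, div_le_div_iff₀ (by positivity) two_pos]
      ring_nf
      nlinarith
    nlinarith
  intro x
  have := hform x
  rw [hB] at this
  have hψ1 : ψ 1 = κ 1 / 2 := by linarith [hB]
  rw [this, hψ1]
  ring


def rho (X : Ω → ℝ) : ℝ → ℝ := fun t => ‖cf X t‖

def psi (X : Ω → ℝ) : ℝ → ℝ := fun t => - Real.log (rho X t)

lemma rho_nonneg (X : Ω → ℝ) (t : ℝ) : 0 ≤ rho X t := norm_nonneg _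

lemma rho_le_one (X : Ω → ℝ) (t : ℝ) : rho X t ≤ 1 := norm_cf_le_one t

lemma rho_zero (X : Ω → ℝ) : rho X 0 = 1 := by rw [rho, cf_zero, norm_one]

lemma rho_continuous {X : Ω → ℝ} (hm : Measurable X) : Continuous (rho X) :=
  (continuous_cf hm).norm

lemma psi_zero (X : Ω → ℝ) : psi X 0 = 0 := by rw [psi, rho_zero, Real.log_one, neg_zero]

lemma psi_nonneg (X : Ω → ℝ) (t : ℝ) : 0 ≤ psi X t := by
  rw [psi]
  have := Real.log_nonpos (rho_nonneg X t) (rho_le_one X t)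
  linarith

lemma psi_continuous {X : Ω → ℝ} (hm : Measurable X) (hnz : ∀ t, rho X t ≠ 0) :
    Continuous (psi X) := by
  rw [continuous_iff_continuousAt]
  intro x
  exact ((Real.continuousAt_log (hnz x)).comp (rho_continuous hm).continuousAt).neg

lemma psi_eq_one_of (X : Ω → ℝ) (t : ℝ) (hz : rho X t ≠ 0) (h : psi X t = 0) : rho X t = 1 := by
  rw [psi, neg_eq_zero] at h
  rcases Real.log_eq_zero.mp h with h' | h' | h'
  · exact absurd h' hz
  · exact h'
  · exfalso
    have := rho_nonneg X t
    linarith [h' ▸ this]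

lemma lg3 (x y z : ℝ) (hx : x ≠ 0) (hy : y ≠ 0) (hz : z ≠ 0) :
    Real.log (x * y * z) = Real.log x + Real.log y + Real.log z := by
  rw [Real.log_mul (mul_ne_zero hx hy) hz, Real.log_mul hx hy]

end SDproof

/- Lemma 2 (second part): arithmetic restrictions on the coefficients `a1, a2, b1, b2`
when the three linear statistics of three independent real random variables with
nondegenerate distributions are independent. -/

open SDproof in
theorem statement3
    {Ω : Type*} [MeasureSpace Ω] [IsProbabilityMeasure (ℙ : Measure Ω)]
    (ξ1 ξ2 ξ3 : Ω → ℝ) (hm1 : Measurable ξ1) (hm2 : Measurable ξ2) (hm3 : Measurable ξ3)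
    (hindep : iIndepFun ![ξ1, ξ2, ξ3] ℙ)
    (hnd1 : ¬∃ c : ℝ, Measure.map ξ1 ℙ = Measure.dirac c)
    (hnd2 : ¬∃ c : ℝ, Measure.map ξ2 ℙ = Measure.dirac c)
    (hnd3 : ¬∃ c : ℝ, Measure.map ξ3 ℙ = Measure.dirac c)
    (a1 a2 b1 b2 : ℝ) (ha1 : a1 ≠ 0) (ha2 : a2 ≠ 0) (hb1 : b1 ≠ 0) (hb2 : b2 ≠ 0)
    (hL : iIndepFun
      ![fun ω => ξ1 ω + ξ2 ω + ξ3 ω,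
        fun ω => a1 * ξ1 ω + a2 * ξ2 ω + ξ3 ω,
        fun ω => b1 * ξ1 ω + b2 * ξ2 ω + ξ3 ω] ℙ) :
    -- (1)
    a1 * b2 - a1 * a2 * b2 - a1 * b1 * b2 - a2 * b1 + a1 * a2 * b1 + a2 * b1 * b2 = 0 ∧
    -- (2) the sign table
    ((0 < a1 ∧ a2 < 0 ∧ b1 < 0 ∧ 0 < b2) ∨
     (0 < a1 ∧ a2 < 0 ∧ b1 < 0 ∧ b2 < 0) ∨
     (a1 < 0 ∧ 0 < a2 ∧ 0 < b1 ∧ b2 < 0) ∨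
     (a1 < 0 ∧ 0 < a2 ∧ b1 < 0 ∧ b2 < 0) ∨
     (a1 < 0 ∧ a2 < 0 ∧ 0 < b1 ∧ b2 < 0) ∨
     (a1 < 0 ∧ a2 < 0 ∧ b1 < 0 ∧ 0 < b2)) ∧
    -- (3)
    a1 ≠ a2 ∧ b1 ≠ b2 ∧
    -- (4)
    a2 * b1 - a1 * b2 ≠ 0 ∧
    -- (5)
    (a1 - 1) * (b2 - 1) - (a2 - 1) * (b1 - 1) ≠ 0 := by
  classical
  set L1 : Ω → ℝ := fun ω => ξ1 ω + ξ2 ω + ξ3 ω with hL1def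
  set L2 : Ω → ℝ := fun ω => a1 * ξ1 ω + a2 * ξ2 ω + ξ3 ω with hL2def
  set L3 : Ω → ℝ := fun ω => b1 * ξ1 ω + b2 * ξ2 ω + ξ3 ω with hL3def
  have hmL1 : Measurable L1 := (hm1.add hm2).add hm3
  have hmL2 : Measurable L2 := ((hm1.const_mul a1).add (hm2.const_mul a2)).add hm3
  have hmL3 : Measurable L3 := ((hm1.const_mul b1).add (hm2.const_mul b2)).add hm3
  have hξmeas : ∀ i : Fin 3, Measurable (![ξ1, ξ2, ξ3] i) := by
    intro i; fin_cases i <;> simpa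
  have hLmeas : ∀ i : Fin 3, Measurable (![L1, L2, L3] i) := by
    intro i; fin_cases i <;> simpa
  -- independence of ξ1 from (ξ2, ξ3)
  have hiξ : IndepFun ξ1 (fun ω => (ξ2 ω, ξ3 ω)) ℙ := by
    have := hindep.indepFun_prodMk hξmeas 1 2 0 (by decide) (by decide)
    have h2 : IndepFun (fun ω => (ξ2 ω, ξ3 ω)) ξ1 ℙ := by simpa using this
    exact h2.symm
  -- claim (5)
  have claim5 : (a1 - 1) * (b2 - 1) - (a2 - 1) * (b1 - 1) ≠ 0 := by
    intro hdet
    obtain ⟨c1, c2, c3, hcne, he1, he2, he3⟩ :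
        ∃ c1 c2 c3 : ℝ, ¬(c1 = 0 ∧ c2 = 0 ∧ c3 = 0) ∧
          c1 + c2 * a1 + c3 * b1 = 0 ∧ c1 + c2 * a2 + c3 * b2 = 0 ∧ c1 + c2 + c3 = 0 := by
      by_cases h11 : a1 = 1 ∧ b1 = 1
      · by_cases h22 : a2 = 1 ∧ b2 = 1
        · refine ⟨1, -1, 0, ?_, ?_, ?_, by ring⟩
          · intro ⟨h, _⟩; exact one_ne_zero h
          · rw [h11.1]; ring
          · rw [h22.1]; ring
        · refine ⟨-(b2-1) - (1-a2), b2-1, 1-a2, ?_, ?_, by ring, by ring⟩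
          · intro ⟨_, hc2, hc3⟩
            apply h22
            constructor
            · have : a2 - 1 = 0 := by linarith [hc3]
              linarith
            · linarith [hc2]
          · linear_combination hdet
      · refine ⟨-(b1-1) - (1-a1), b1-1, 1-a1, ?_, by ring, ?_, by ring⟩
        · intro ⟨_, hc2, hc3⟩
          apply h11
          constructor
          · have : a1 - 1 = 0 := by linarith [hc3]
            linarith
          · linarith [hc2]
        · linear_combination -hdet
    have hrel : ∀ ω, c1 * L1 ω + c2 * L2 ω + c3 * L3 ω = 0 := by
      intro ω
      simp only [hL1def, hL2def, hL3def]
      linear_combination (ξ1 ω) * he1 + (ξ2 ω) * he2 + (ξ3 ω) * he3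
    by_cases hc3 : c3 ≠ 0
    · -- L3 is a function of (L1, L2)
      have hpair : IndepFun (fun ω => (L1 ω, L2 ω)) L3 ℙ := by
        have := hL.indepFun_prodMk hLmeas 0 1 2 (by decide) (by decide)
        simpa using this
      have hg : Measurable fun p : ℝ × ℝ => -(c1 * p.1 + c2 * p.2) / c3 := by fun_prop
      have heq : L3 =ᵐ[ℙ] fun ω =>
          (fun p : ℝ × ℝ => -(c1 * p.1 + c2 * p.2) / c3) ((fun ω => (L1 ω, L2 ω)) ω) := by
        apply Filter.Eventually.of_forall
        intro ω
        show L3 ω = -(c1 * L1 ω + c2 * L2 ω) / c3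
        rw [eq_div_iff hc3]
        linarith [hrel ω]
      obtain ⟨cst, hdirac⟩ := dirac_of_indep_eq hmL3 hpair.symm hg heq
      have hL3c : L3 =ᵐ[ℙ] fun _ => cst := ae_const_of_map_dirac hmL3 hdirac
      have hg2 : Measurable fun p : ℝ × ℝ => (cst - (b2 * p.1 + p.2)) / b1 := by fun_prop
      have heq2 : ξ1 =ᵐ[ℙ] fun ω =>
          (fun p : ℝ × ℝ => (cst - (b2 * p.1 + p.2)) / b1) ((fun ω => (ξ2 ω, ξ3 ω)) ω) := by
        filter_upwards [hL3c] with ω hω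
        show ξ1 ω = (cst - (b2 * ξ2 ω + ξ3 ω)) / b1
        rw [eq_div_iff hb1]
        have hω' : b1 * ξ1 ω + b2 * ξ2 ω + ξ3 ω = cst := by
          simpa [hL3def] using hω
        linarith
      exact hnd1 (dirac_of_indep_eq hm1 hiξ hg2 heq2)
    · push_neg at hc3
      by_cases hc2 : c2 ≠ 0
      · -- L2 is a function of L1
        have hpair : IndepFun L1 L2 ℙ := by
          have := hL.indepFun (i := 0) (j := 1) (by decide)
          simpa using this
        have hg : Measurable fun x : ℝ => -(c1 * x) / c2 := by fun_prop
        have heq : L2 =ᵐ[ℙ] fun ω => (fun x : ℝ => -(c1 * x) / c2) (L1 ω) := by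
          apply Filter.Eventually.of_forall
          intro ω
          show L2 ω = -(c1 * L1 ω) / c2
          rw [eq_div_iff hc2]
          have h := hrel ω
          rw [hc3, zero_mul, add_zero] at h
          linarith
        obtain ⟨cst, hdirac⟩ := dirac_of_indep_eq hmL2 hpair.symm hg heq
        have hL2c : L2 =ᵐ[ℙ] fun _ => cst := ae_const_of_map_dirac hmL2 hdirac
        have hg2 : Measurable fun p : ℝ × ℝ => (cst - (a2 * p.1 + p.2)) / a1 := by fun_prop
        have heq2 : ξ1 =ᵐ[ℙ] fun ω =>
            (fun p : ℝ × ℝ => (cst - (a2 * p.1 + p.2)) / a1) ((fun ω => (ξ2 ω, ξ3 ω)) ω) := by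
          filter_upwards [hL2c] with ω hω
          show ξ1 ω = (cst - (a2 * ξ2 ω + ξ3 ω)) / a1
          rw [eq_div_iff ha1]
          have hω' : a1 * ξ1 ω + a2 * ξ2 ω + ξ3 ω = cst := by
            simpa [hL2def] using hω
          linarith
        exact hnd1 (dirac_of_indep_eq hm1 hiξ hg2 heq2)
      · push_neg at hc2
        have hc1 : c1 ≠ 0 := by
          intro hc1
          exact hcne ⟨hc1, hc2, hc3⟩
        have hg2 : Measurable fun p : ℝ × ℝ => -(p.1 + p.2) := by fun_prop
        have heq2 : ξ1 =ᵐ[ℙ] fun ω =>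
            (fun p : ℝ × ℝ => -(p.1 + p.2)) ((fun ω => (ξ2 ω, ξ3 ω)) ω) := by
          apply Filter.Eventually.of_forall
          intro ω
          show ξ1 ω = -(ξ2 ω + ξ3 ω)
          have h := hrel ω
          rw [hc2, hc3, zero_mul, zero_mul, add_zero, add_zero] at h
          have hL10 : ξ1 ω + ξ2 ω + ξ3 ω = 0 := by
            have h0 : c1 * (ξ1 ω + ξ2 ω + ξ3 ω) = 0 := by
              have : L1 ω = ξ1 ω + ξ2 ω + ξ3 ω := by rw [hL1def]
              rw [← this]
              exact h
            exact (mul_eq_zero.mp h0).resolve_left hc1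
          linarith
        exact hnd1 (dirac_of_indep_eq hm1 hiξ hg2 heq2)
  -- characteristic function product identity (triple)
  have expCongr : ∀ r s : ℝ, r = s →
      Complex.exp ((r : ℝ) * Complex.I) = Complex.exp ((s : ℝ) * Complex.I) := by
    intro r s h; rw [h]
  have hTC : ∀ v1 v2 v3 : ℝ,
      cf ξ1 (v1 + a1*v2 + b1*v3) * cf ξ2 (v1 + a2*v2 + b2*v3) * cf ξ3 (v1 + v2 + v3)
      = ((cf ξ1 v1 * cf ξ2 v1 * cf ξ3 v1) * (cf ξ1 (a1*v2) * cf ξ2 (a2*v2) * cf ξ3 v2))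
        * (cf ξ1 (b1*v3) * cf ξ2 (b2*v3) * cf ξ3 v3) := by
    intro v1 v2 v3
    have hLa := cf_add_three hmL1 hmL2 hmL3 hL v1 v2 v3
    have harg : (fun ω => Complex.exp ((v1 * L1 ω + v2 * L2 ω + v3 * L3 ω : ℝ) * Complex.I))
        = fun ω => Complex.exp (((v1 + a1*v2 + b1*v3) * ξ1 ω + (v1 + a2*v2 + b2*v3) * ξ2 ω
            + (v1 + v2 + v3) * ξ3 ω : ℝ) * Complex.I) := by
      funext ω
      apply expCongr
      simp only [hL1def, hL2def, hL3def]
      ring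
    rw [harg, cf_add_three hm1 hm2 hm3 hindep] at hLa
    have hc1 : cf L1 v1 = cf ξ1 v1 * cf ξ2 v1 * cf ξ3 v1 := by
      conv_lhs => rw [cf]
      have harg1 : (fun ω => Complex.exp ((v1 * L1 ω : ℝ) * Complex.I))
          = fun ω => Complex.exp ((v1 * ξ1 ω + v1 * ξ2 ω + v1 * ξ3 ω : ℝ) * Complex.I) := by
        funext ω; apply expCongr; simp only [hL1def]; ring
      rw [harg1]
      exact cf_add_three hm1 hm2 hm3 hindep v1 v1 v1
    have hc2 : cf L2 v2 = cf ξ1 (a1*v2) * cf ξ2 (a2*v2) * cf ξ3 v2 := by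
      conv_lhs => rw [cf]
      have harg2 : (fun ω => Complex.exp ((v2 * L2 ω : ℝ) * Complex.I))
          = fun ω => Complex.exp ((a1*v2 * ξ1 ω + a2*v2 * ξ2 ω + v2 * ξ3 ω : ℝ) * Complex.I) := by
        funext ω; apply expCongr; simp only [hL2def]; ring
      rw [harg2]
      exact cf_add_three hm1 hm2 hm3 hindep (a1*v2) (a2*v2) v2
    have hc3' : cf L3 v3 = cf ξ1 (b1*v3) * cf ξ2 (b2*v3) * cf ξ3 v3 := by
      conv_lhs => rw [cf]
      have harg3 : (fun ω => Complex.exp ((v3 * L3 ω : ℝ) * Complex.I))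
          = fun ω => Complex.exp ((b1*v3 * ξ1 ω + b2*v3 * ξ2 ω + v3 * ξ3 ω : ℝ) * Complex.I) := by
        funext ω; apply expCongr; simp only [hL3def]; ring
      rw [harg3]
      exact cf_add_three hm1 hm2 hm3 hindep (b1*v3) (b2*v3) v3
    rw [hc1, hc2, hc3'] at hLa
    exact hLa
  have hT : ∀ v1 v2 v3 : ℝ,
      rho ξ1 (v1 + a1*v2 + b1*v3) * rho ξ2 (v1 + a2*v2 + b2*v3) * rho ξ3 (v1 + v2 + v3)
      = ((rho ξ1 v1 * rho ξ2 v1 * rho ξ3 v1) * (rho ξ1 (a1*v2) * rho ξ2 (a2*v2) * rho ξ3 v2))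
        * (rho ξ1 (b1*v3) * rho ξ2 (b2*v3) * rho ξ3 v3) := by
    intro v1 v2 v3
    have := congrArg norm (hTC v1 v2 v3)
    simpa only [norm_mul, rho] using this
  have hPa : ∀ s t : ℝ, rho ξ1 (s + a1*t) * rho ξ2 (s + a2*t) * rho ξ3 (s + 1*t)
      = (rho ξ1 s * rho ξ2 s * rho ξ3 s)
        * (rho ξ1 (a1*t) * rho ξ2 (a2*t) * rho ξ3 (1*t)) := by
    intro s t
    have h := hT s t 0
    simp only [mul_zero, add_zero, rho_zero, mul_one, one_mul] at h
    simp only [one_mul]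
    exact h
  have hnz : ∀ u, rho ξ1 u ≠ 0 ∧ rho ξ2 u ≠ 0 ∧ rho ξ3 u ≠ 0 :=
    no_zero (rho_continuous hm1) (rho_continuous hm2) (rho_continuous hm3)
      (rho_zero ξ1) (rho_zero ξ2) (rho_zero ξ3) ha1 ha2 one_ne_zero hPa
  -- log functional equation
  have hE : ∀ v1 v2 v3 : ℝ,
      psi ξ1 (v1 + a1*v2 + b1*v3) + psi ξ2 (v1 + a2*v2 + b2*v3) + psi ξ3 (v1 + v2 + v3)
      = (psi ξ1 v1 + psi ξ2 v1 + psi ξ3 v1)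
        + (psi ξ1 (a1*v2) + psi ξ2 (a2*v2) + psi ξ3 v2)
        + (psi ξ1 (b1*v3) + psi ξ2 (b2*v3) + psi ξ3 v3) := by
    intro v1 v2 v3
    have h := hT v1 v2 v3
    have e0 := congrArg Real.log h
    have hA : rho ξ1 v1 * rho ξ2 v1 * rho ξ3 v1 ≠ 0 :=
      mul_ne_zero (mul_ne_zero (hnz _).1 (hnz _).2.1) (hnz _).2.2
    have hB : rho ξ1 (a1*v2) * rho ξ2 (a2*v2) * rho ξ3 v2 ≠ 0 :=
      mul_ne_zero (mul_ne_zero (hnz _).1 (hnz _).2.1) (hnz _).2.2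
    have hC : rho ξ1 (b1*v3) * rho ξ2 (b2*v3) * rho ξ3 v3 ≠ 0 :=
      mul_ne_zero (mul_ne_zero (hnz _).1 (hnz _).2.1) (hnz _).2.2
    rw [lg3 _ _ _ (hnz _).1 (hnz _).2.1 (hnz _).2.2,
        lg3 _ _ _ hA hB hC,
        lg3 _ _ _ (hnz _).1 (hnz _).2.1 (hnz _).2.2,
        lg3 _ _ _ (hnz _).1 (hnz _).2.1 (hnz _).2.2,
        lg3 _ _ _ (hnz _).1 (hnz _).2.1 (hnz _).2.2] at e0
    simp only [psi]
    linarith [e0]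
  have hDne : (a1 - 1) * (b2 - 1) - (a2 - 1) * (b1 - 1) ≠ 0 := claim5
  -- generic key construction for ψ1
  have mkkey1 : ∀ d1 d2 d3 : ℝ,
      (d1 + a1*d2 + b1*d3 = 1) → (d1 + a2*d2 + b2*d3 = 0) → (d1 + d2 + d3 = 0) →
      ∀ t x y : ℝ, psi ξ1 (x + a1*y + t) - psi ξ1 (x + a1*y)
        = ((fun z => psi ξ1 z + psi ξ2 z + psi ξ3 z) (x + t*d1)
            - (fun z => psi ξ1 z + psi ξ2 z + psi ξ3 z) x)
          + ((fun z => psi ξ1 (a1*z) + psi ξ2 (a2*z) + psi ξ3 z) (y + t*d2)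
            - (fun z => psi ξ1 (a1*z) + psi ξ2 (a2*z) + psi ξ3 z) y)
          + ((fun z => psi ξ1 (b1*z) + psi ξ2 (b2*z) + psi ξ3 z) (t*d3)
            - (fun z => psi ξ1 (b1*z) + psi ξ2 (b2*z) + psi ξ3 z) 0) := by
    intro d1 d2 d3 hd1 hd2 hd3 t x y
    have h1 := hE (x + t*d1) (y + t*d2) (t*d3)
    have h2 := hE x y 0
    have e1 : (x + t*d1) + a1*(y + t*d2) + b1*(t*d3) = x + a1*y + t := by
      linear_combination t * hd1
    have e2 : (x + t*d1) + a2*(y + t*d2) + b2*(t*d3) = x + a2*y := by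
      linear_combination t * hd2
    have e3 : (x + t*d1) + (y + t*d2) + (t*d3) = x + y := by
      linear_combination t * hd3
    rw [e1, e2, e3] at h1
    simp only [mul_zero, add_zero] at h2
    simp only [mul_zero, add_zero]
    linarith [h1, h2]
  have mkkey2 : ∀ d1 d2 d3 : ℝ,
      (d1 + a1*d2 + b1*d3 = 0) → (d1 + a2*d2 + b2*d3 = 1) → (d1 + d2 + d3 = 0) →
      ∀ t x y : ℝ, psi ξ2 (x + a2*y + t) - psi ξ2 (x + a2*y)
        = ((fun z => psi ξ1 z + psi ξ2 z + psi ξ3 z) (x + t*d1)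
            - (fun z => psi ξ1 z + psi ξ2 z + psi ξ3 z) x)
          + ((fun z => psi ξ1 (a1*z) + psi ξ2 (a2*z) + psi ξ3 z) (y + t*d2)
            - (fun z => psi ξ1 (a1*z) + psi ξ2 (a2*z) + psi ξ3 z) y)
          + ((fun z => psi ξ1 (b1*z) + psi ξ2 (b2*z) + psi ξ3 z) (t*d3)
            - (fun z => psi ξ1 (b1*z) + psi ξ2 (b2*z) + psi ξ3 z) 0) := by
    intro d1 d2 d3 hd1 hd2 hd3 t x y
    have h1 := hE (x + t*d1) (y + t*d2) (t*d3)
    have h2 := hE x y 0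
    have e1 : (x + t*d1) + a1*(y + t*d2) + b1*(t*d3) = x + a1*y := by
      linear_combination t * hd1
    have e2 : (x + t*d1) + a2*(y + t*d2) + b2*(t*d3) = x + a2*y + t := by
      linear_combination t * hd2
    have e3 : (x + t*d1) + (y + t*d2) + (t*d3) = x + y := by
      linear_combination t * hd3
    rw [e1, e2, e3] at h1
    simp only [mul_zero, add_zero] at h2
    simp only [mul_zero, add_zero]
    linarith [h1, h2]
  have mkkey3 : ∀ d1 d2 d3 : ℝ,
      (d1 + a1*d2 + b1*d3 = 0) → (d1 + a2*d2 + b2*d3 = 0) → (d1 + d2 + d3 = 1) →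
      ∀ t x y : ℝ, psi ξ3 (x + 1*y + t) - psi ξ3 (x + 1*y)
        = ((fun z => psi ξ1 z + psi ξ2 z + psi ξ3 z) (x + t*d1)
            - (fun z => psi ξ1 z + psi ξ2 z + psi ξ3 z) x)
          + ((fun z => psi ξ1 (a1*z) + psi ξ2 (a2*z) + psi ξ3 z) (y + t*d2)
            - (fun z => psi ξ1 (a1*z) + psi ξ2 (a2*z) + psi ξ3 z) y)
          + ((fun z => psi ξ1 (b1*z) + psi ξ2 (b2*z) + psi ξ3 z) (t*d3)
            - (fun z => psi ξ1 (b1*z) + psi ξ2 (b2*z) + psi ξ3 z) 0) := by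
    intro d1 d2 d3 hd1 hd2 hd3 t x y
    have h1 := hE (x + t*d1) (y + t*d2) (t*d3)
    have h2 := hE x y 0
    have e1 : (x + t*d1) + a1*(y + t*d2) + b1*(t*d3) = x + a1*y := by
      linear_combination t * hd1
    have e2 : (x + t*d1) + a2*(y + t*d2) + b2*(t*d3) = x + a2*y := by
      linear_combination t * hd2
    have e3 : (x + t*d1) + (y + t*d2) + (t*d3) = x + y + t := by
      linear_combination t * hd3
    rw [e1, e2, e3] at h1
    simp only [mul_zero, add_zero] at h2
    simp only [mul_zero, add_zero, one_mul]
    linarith [h1, h2]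
  -- the three quadratic forms
  set D : ℝ := (a1 - 1) * (b2 - 1) - (a2 - 1) * (b1 - 1) with hDdef
  obtain ⟨A1, hA1⟩ : ∃ A : ℝ, ∀ x, psi ξ1 x = A * x^2 := by
    refine ⟨psi ξ1 1, quadratic_of_funEq
      (H1 := fun z => psi ξ1 z + psi ξ2 z + psi ξ3 z)
      (H2 := fun z => psi ξ1 (a1*z) + psi ξ2 (a2*z) + psi ξ3 z)
      (H3 := fun z => psi ξ1 (b1*z) + psi ξ2 (b2*z) + psi ξ3 z)
      (d1 := -((b2-1)/D) - (-((a2-1)/D))) (d2 := (b2-1)/D) (d3 := -((a2-1)/D))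
      (psi_continuous hm1 fun t => (hnz t).1)
      (psi_zero ξ1) (psi_nonneg ξ1) ha1
      (mkkey1 (-((b2-1)/D) - (-((a2-1)/D))) ((b2-1)/D) (-((a2-1)/D)) ?_ ?_ (by ring))⟩
    · field_simp; rw [hDdef]; ring
    · field_simp; rw [hDdef]; ring
  obtain ⟨A2, hA2⟩ : ∃ A : ℝ, ∀ x, psi ξ2 x = A * x^2 := by
    refine ⟨psi ξ2 1, quadratic_of_funEq
      (H1 := fun z => psi ξ1 z + psi ξ2 z + psi ξ3 z)
      (H2 := fun z => psi ξ1 (a1*z) + psi ξ2 (a2*z) + psi ξ3 z)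
      (H3 := fun z => psi ξ1 (b1*z) + psi ξ2 (b2*z) + psi ξ3 z)
      (d1 := -(-((b1-1)/D)) - ((a1-1)/D)) (d2 := -((b1-1)/D)) (d3 := (a1-1)/D)
      (psi_continuous hm2 fun t => (hnz t).2.1)
      (psi_zero ξ2) (psi_nonneg ξ2) ha2
      (mkkey2 (-(-((b1-1)/D)) - ((a1-1)/D)) (-((b1-1)/D)) ((a1-1)/D) ?_ ?_ (by ring))⟩
    · field_simp; rw [hDdef]; ring
    · field_simp; rw [hDdef]; ring
  obtain ⟨A3, hA3⟩ : ∃ A : ℝ, ∀ x, psi ξ3 x = A * x^2 := by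
    refine ⟨psi ξ3 1, quadratic_of_funEq
      (H1 := fun z => psi ξ1 z + psi ξ2 z + psi ξ3 z)
      (H2 := fun z => psi ξ1 (a1*z) + psi ξ2 (a2*z) + psi ξ3 z)
      (H3 := fun z => psi ξ1 (b1*z) + psi ξ2 (b2*z) + psi ξ3 z)
      (d1 := 1 - (b1-b2)/D - (a2-a1)/D) (d2 := (b1-b2)/D) (d3 := (a2-a1)/D)
      (psi_continuous hm3 fun t => (hnz t).2.2)
      (psi_zero ξ3) (psi_nonneg ξ3) one_ne_zero
      (mkkey3 (1 - (b1-b2)/D - (a2-a1)/D) ((b1-b2)/D) ((a2-a1)/D) ?_ ?_ (by ring))⟩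
    · field_simp; rw [hDdef]; ring
    · field_simp; rw [hDdef]; ring
  -- positivity of the coefficients
  have hA1nn : 0 ≤ A1 := by
    have h := psi_nonneg ξ1 1
    rw [hA1 1] at h
    nlinarith
  have hA2nn : 0 ≤ A2 := by
    have h := psi_nonneg ξ2 1
    rw [hA2 1] at h
    nlinarith
  have hA3nn : 0 ≤ A3 := by
    have h := psi_nonneg ξ3 1
    rw [hA3 1] at h
    nlinarith
  have hA1pos : 0 < A1 := by
    rcases lt_or_eq_of_le hA1nn with h | h
    · exact h
    · exfalso
      apply hnd1
      apply dirac_of_cf_norm_one hm1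
      intro t
      have h0 : psi ξ1 t = 0 := by rw [hA1 t, ← h]; ring
      have := psi_eq_one_of ξ1 t (hnz t).1 h0
      simpa [rho] using this
  have hA2pos : 0 < A2 := by
    rcases lt_or_eq_of_le hA2nn with h | h
    · exact h
    · exfalso
      apply hnd2
      apply dirac_of_cf_norm_one hm2
      intro t
      have h0 : psi ξ2 t = 0 := by rw [hA2 t, ← h]; ring
      have := psi_eq_one_of ξ2 t (hnz t).2.1 h0
      simpa [rho] using this
  have hA3pos : 0 < A3 := by
    rcases lt_or_eq_of_le hA3nn with h | h
    · exact h
    · exfalso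
      apply hnd3
      apply dirac_of_cf_norm_one hm3
      intro t
      have h0 : psi ξ3 t = 0 := by rw [hA3 t, ← h]; ring
      have := psi_eq_one_of ξ3 t (hnz t).2.2 h0
      simpa [rho] using this
  -- the three covariance-type equations
  have E12 : A1*a1 + A2*a2 + A3 = 0 := by
    have hp := hE 1 1 0
    have hm := hE 1 (-1) 0
    simp only [hA1, hA2, hA3] at hp hm
    linear_combination (hp - hm) / 4
  have E13 : A1*b1 + A2*b2 + A3 = 0 := by
    have hp := hE 1 0 1
    have hm := hE 1 0 (-1)
    simp only [hA1, hA2, hA3] at hp hm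
    linear_combination (hp - hm) / 4
  have E23 : A1*(a1*b1) + A2*(a2*b2) + A3 = 0 := by
    have hp := hE 0 1 1
    have hm := hE 0 1 (-1)
    simp only [hA1, hA2, hA3] at hp hm
    linear_combination (hp - hm) / 4
  -- final algebra
  have g1 : a1 * b2 - a1 * a2 * b2 - a1 * b1 * b2 - a2 * b1 + a1 * a2 * b1 + a2 * b1 * b2 = 0 := by
    have hPA : (a1 * b2 - a1 * a2 * b2 - a1 * b1 * b2 - a2 * b1 + a1 * a2 * b1
        + a2 * b1 * b2) * A1 = 0 := by
      linear_combination (a2*(1-b2) - (a2-b2)) * E12 - (a2*(1-b2)) * E13 + (a2-b2) * E23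
    rcases mul_eq_zero.mp hPA with h | h
    · exact h
    · exact absurd h (ne_of_gt hA1pos)
  have g3a : a1 ≠ a2 := by
    intro heq
    have h1 : b1*A1 + b2*A2 = -A3 := by linarith [E13]
    have h2 := E23
    rw [← heq] at h2
    have h3 : A3*(1 - a1) = 0 := by linear_combination h2 - a1 * h1
    have ha11 : a1 = 1 := by
      rcases mul_eq_zero.mp h3 with h | h
      · exact absurd h (ne_of_gt hA3pos)
      · linarith
    have h4 := E12
    rw [← heq, ha11] at h4
    nlinarith [hA1pos, hA2pos, hA3pos]
  have g3b : b1 ≠ b2 := by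
    intro heq
    have h1 : a1*A1 + a2*A2 = -A3 := by linarith [E12]
    have h2 := E23
    rw [← heq] at h2
    have h3 : A3*(1 - b1) = 0 := by linear_combination h2 - b1 * h1
    have hb11 : b1 = 1 := by
      rcases mul_eq_zero.mp h3 with h | h
      · exact absurd h (ne_of_gt hA3pos)
      · linarith
    have h4 := E13
    rw [← heq, hb11] at h4
    nlinarith [hA1pos, hA2pos, hA3pos]
  have g4 : a2 * b1 - a1 * b2 ≠ 0 := by
    intro h
    have k1 : A2*(a2*b1 - a1*b2) + A3*(b1 - a1) = 0 := by
      linear_combination b1*E12 - a1*E13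
    rw [h, mul_zero, zero_add] at k1
    have hb1a1 : b1 = a1 := by
      rcases mul_eq_zero.mp k1 with h' | h'
      · exact absurd h' (ne_of_gt hA3pos)
      · linarith
    have hb2a2 : b2 = a2 := by
      rw [hb1a1] at h
      have h' : a1*(a2 - b2) = 0 := by linear_combination h
      rcases mul_eq_zero.mp h' with h'' | h''
      · exact absurd h'' ha1
      · linarith
    have h2 := E23
    rw [hb1a1, hb2a2] at h2
    nlinarith [mul_pos hA1pos (mul_self_pos.mpr ha1), mul_pos hA2pos (mul_self_pos.mpr ha2),
      hA3pos]
  have g2 : ((0 < a1 ∧ a2 < 0 ∧ b1 < 0 ∧ 0 < b2) ∨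
     (0 < a1 ∧ a2 < 0 ∧ b1 < 0 ∧ b2 < 0) ∨
     (a1 < 0 ∧ 0 < a2 ∧ 0 < b1 ∧ b2 < 0) ∨
     (a1 < 0 ∧ 0 < a2 ∧ b1 < 0 ∧ b2 < 0) ∨
     (a1 < 0 ∧ a2 < 0 ∧ 0 < b1 ∧ b2 < 0) ∨
     (a1 < 0 ∧ a2 < 0 ∧ b1 < 0 ∧ 0 < b2)) := by
    rcases ha1.lt_or_gt with ha1' | ha1' <;> rcases ha2.lt_or_gt with ha2' | ha2' <;>
      rcases hb1.lt_or_gt with hb1' | hb1' <;> rcases hb2.lt_or_gt with hb2' | hb2'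
    -- a1<0, a2<0, b1<0, b2<0
    · exfalso
      linarith [E23, mul_pos hA1pos (mul_pos_of_neg_of_neg ha1' hb1'),
        mul_pos hA2pos (mul_pos_of_neg_of_neg ha2' hb2'), hA3pos]
    -- a1<0, a2<0, b1<0, 0<b2
    · exact Or.inr (Or.inr (Or.inr (Or.inr (Or.inr ⟨ha1', ha2', hb1', hb2'⟩))))
    -- a1<0, a2<0, 0<b1, b2<0
    · exact Or.inr (Or.inr (Or.inr (Or.inr (Or.inl ⟨ha1', ha2', hb1', hb2'⟩))))
    -- a1<0, a2<0, 0<b1, 0<b2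
    · exfalso
      linarith [E13, mul_pos hA1pos hb1', mul_pos hA2pos hb2', hA3pos]
    -- a1<0, 0<a2, b1<0, b2<0
    · exact Or.inr (Or.inr (Or.inr (Or.inl ⟨ha1', ha2', hb1', hb2'⟩)))
    -- a1<0, 0<a2, b1<0, 0<b2
    · exfalso
      linarith [E23, mul_pos hA1pos (mul_pos_of_neg_of_neg ha1' hb1'),
        mul_pos hA2pos (mul_pos ha2' hb2'), hA3pos]
    -- a1<0, 0<a2, 0<b1, b2<0
    · exact Or.inr (Or.inr (Or.inl ⟨ha1', ha2', hb1', hb2'⟩))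
    -- a1<0, 0<a2, 0<b1, 0<b2
    · exfalso
      linarith [E13, mul_pos hA1pos hb1', mul_pos hA2pos hb2', hA3pos]
    -- 0<a1, a2<0, b1<0, b2<0
    · exact Or.inr (Or.inl ⟨ha1', ha2', hb1', hb2'⟩)
    -- 0<a1, a2<0, b1<0, 0<b2
    · exact Or.inl ⟨ha1', ha2', hb1', hb2'⟩
    -- 0<a1, a2<0, 0<b1, b2<0
    · exfalso
      linarith [E23, mul_pos hA1pos (mul_pos ha1' hb1'),
        mul_pos hA2pos (mul_pos_of_neg_of_neg ha2' hb2'), hA3pos]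
    -- 0<a1, a2<0, 0<b1, 0<b2
    · exfalso
      linarith [E13, mul_pos hA1pos hb1', mul_pos hA2pos hb2', hA3pos]
    -- 0<a1, 0<a2, b1<0, b2<0
    · exfalso
      linarith [E12, mul_pos hA1pos ha1', mul_pos hA2pos ha2', hA3pos]
    -- 0<a1, 0<a2, b1<0, 0<b2
    · exfalso
      linarith [E12, mul_pos hA1pos ha1', mul_pos hA2pos ha2', hA3pos]
    -- 0<a1, 0<a2, 0<b1, b2<0
    · exfalso
      linarith [E12, mul_pos hA1pos ha1', mul_pos hA2pos ha2', hA3pos]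
    -- 0<a1, 0<a2, 0<b1, 0<b2
    · exfalso
      linarith [E12, mul_pos hA1pos ha1', mul_pos hA2pos ha2', hA3pos]
  exact ⟨g1, g2, g3a, g3b, g4, claim5⟩
end
end

section
/- Let X be a topological abelian group and G a Borel subgroup of X. Let μ be a probability measure on X concentrated on G (i.e. μ(X ∖ G) = 0), and suppose μ = μ1 ∗ μ2 for probability measures μ1, μ2 on X. Then there exists x ∈ X such that the shifted measures μ′1 = μ1 ∗ δ_x and μ′2 = μ2 ∗ δ_{−x} are both concentrated on G and μ = μ′1 ∗ μ′2. -/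
/- Lemma 3: if a probability measure concentrated on a Borel subgroup `G` of a topological
abelian group `X` is a convolution `μ = μ1 ∗ μ2`, then the factors may be shifted so as to
be concentrated on `G`. -/

open MeasureTheory Pointwise

section Aux

variable {X : Type*} [TopologicalSpace X] [AddCommGroup X] [IsTopologicalAddGroup X]
    [MeasurableSpace X] [BorelSpace X]

/-- Convolution with a Dirac measure is translation, even without second countability:
addition is a.e. measurable with respect to `μ ⊗ δ_x` because the candidate
`g p = if Inseparable p.2 x then p.1 + p.2 else p.1 + x` is measurable (Borel sets
cannot separate inseparable points). -/
theorem conv_dirac_eq_map (μ : Measure X) [SFinite μ] (x : X) :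
    μ.conv (Measure.dirac x) = μ.map (· + x) := by
  classical
  set g : X × X → X := fun p => if Inseparable p.2 x then p.1 + p.2 else p.1 + x with hgdef
  have hkey : ∀ B : Set X, MeasurableSet B → g ⁻¹' B = ((· + x) ⁻¹' B) ×ˢ Set.univ := by
    intro B hB
    ext p
    by_cases h : Inseparable p.2 x
    · have h2 : Inseparable (p.1 + p.2) (p.1 + x) := h.map (continuous_const.add continuous_id)
      simp [hgdef, h, h2.mem_measurableSet_iff hB]
    · simp [hgdef, h]
  have htr : Measurable fun a : X => a + x := (continuous_add_right x).measurable
  have hg : Measurable g := by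
    intro B hB
    rw [hkey B hB]
    exact (htr hB).prod MeasurableSet.univ
  have hins : MeasurableSet {y : X | Inseparable y x} := by
    have : {y : X | Inseparable y x} = (fun y : X => y - x) ⁻¹' closure (0 : Set X) := by
      ext y
      simp only [Set.mem_setOf_eq, Set.mem_preimage]
      exact addGroup_inseparable_iff
    rw [this]
    exact (continuous_id.sub continuous_const).measurable isClosed_closure.measurableSet
  have hnull : (μ.prod (Measure.dirac x)) {p : X × X | ¬ Inseparable p.2 x} = 0 := by
    have : {p : X × X | ¬ Inseparable p.2 x} = Set.univ ×ˢ {y : X | Inseparable y x}ᶜ := by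
      ext p; simp
    rw [this, Measure.prod_prod, Measure.dirac_apply' _ hins.compl]
    simp [Set.indicator, Inseparable.refl]
  have hae : (fun p : X × X => p.1 + p.2) =ᵐ[μ.prod (Measure.dirac x)] g := by
    rw [Filter.EventuallyEq, ae_iff]
    refine measure_mono_null ?_ hnull
    intro p hp
    simp only [Set.mem_setOf_eq] at hp ⊢
    intro h
    exact hp (by simp [hgdef, h])
  have hAE : AEMeasurable (fun p : X × X => p.1 + p.2) (μ.prod (Measure.dirac x)) :=
    ⟨g, hg, hae⟩
  ext B hB
  have h1 : μ.conv (Measure.dirac x) B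
      = (μ.prod (Measure.dirac x)) ((fun p : X × X => p.1 + p.2) ⁻¹' B) := by
    rw [show μ.conv (Measure.dirac x)
        = Measure.map (fun p : X × X => p.1 + p.2) (μ.prod (Measure.dirac x)) from rfl]
    exact Measure.map_apply_of_aemeasurable hAE hB
  have h2 : ((fun p : X × X => p.1 + p.2) ⁻¹' B) =ᵐ[μ.prod (Measure.dirac x)] (g ⁻¹' B) :=
    hae.mono fun p hp => by
      show (p.1 + p.2 ∈ B) = (g p ∈ B)
      rw [show p.1 + p.2 = g p from hp]
  rw [h1, measure_congr h2, hkey B hB, Measure.prod_prod, measure_univ, mul_one,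
    Measure.map_apply htr hB]

end Aux

theorem statement4
    {X : Type*} [TopologicalSpace X] [AddCommGroup X] [IsTopologicalAddGroup X]
    [MeasurableSpace X] [BorelSpace X]
    (G : AddSubgroup X) (hG : MeasurableSet (G : Set X))
    (μ μ1 μ2 : Measure X)
    [IsProbabilityMeasure μ] [IsProbabilityMeasure μ1] [IsProbabilityMeasure μ2]
    (hconc : ∀ B : Set X, MeasurableSet B → B ∩ (G : Set X) = ∅ → μ B = 0)
    (hconv : μ = μ1.conv μ2) :
    ∃ x : X,
      (∀ B : Set X, MeasurableSet B → B ∩ (G : Set X) = ∅ →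
        (μ1.conv (Measure.dirac x)) B = 0) ∧
      (∀ B : Set X, MeasurableSet B → B ∩ (G : Set X) = ∅ →
        (μ2.conv (Measure.dirac (-x))) B = 0) ∧
      μ = (μ1.conv (Measure.dirac x)).conv (μ2.conv (Measure.dirac (-x))) := by
  classical
  set P := μ1.prod μ2 with hPdef
  -- μ is concentrated on G, so μ G = 1
  have hμG : μ (G : Set X) = 1 := by
    have h0 : μ ((G : Set X)ᶜ) = 0 := hconc _ hG.compl (Set.compl_inter_self _)
    exact (prob_compl_eq_zero_iff hG).mp h0
  -- addition is a.e. measurable w.r.t. μ1 × μ2 (else the convolution would be 0)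
  have hAE : AEMeasurable (fun p : X × X => p.1 + p.2) P := by
    by_contra h
    rw [show μ1.conv μ2 = Measure.map (fun p : X × X => p.1 + p.2) P from rfl,
      Measure.map_of_not_aemeasurable h] at hconv
    have : (1 : ENNReal) = 0 := by
      rw [← measure_univ (μ := μ), hconv]; simp
    exact one_ne_zero this
  set g : X × X → X := hAE.mk _ with hgdef
  have hg : Measurable g := hAE.measurable_mk
  have heq : (fun p : X × X => p.1 + p.2) =ᵐ[P] g := hAE.ae_eq_mk
  have hPG : P ((fun p : X × X => p.1 + p.2) ⁻¹' (G : Set X)) = 1 := by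
    rw [← Measure.map_apply_of_aemeasurable hAE hG]
    rw [show Measure.map (fun p : X × X => p.1 + p.2) P = μ1.conv μ2 from rfl, ← hconv]
    exact hμG
  have hsetae : ((fun p : X × X => p.1 + p.2) ⁻¹' (G : Set X)) =ᵐ[P] (g ⁻¹' (G : Set X)) :=
    heq.mono fun p hp => by
      show (p.1 + p.2 ∈ (G : Set X)) = (g p ∈ (G : Set X))
      rw [show p.1 + p.2 = g p from hp]
  have hPg : P (g ⁻¹' (G : Set X)) = 1 := by
    rw [← measure_congr hsetae]; exact hPG
  -- Fubini: the section measure is 1 for μ1-a.e. first coordinate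
  have hmeasF : Measurable fun a => μ2 (Prod.mk a ⁻¹' (g ⁻¹' (G : Set X))) :=
    measurable_measure_prodMk_left (hg hG)
  have hintF : ∫⁻ a, μ2 (Prod.mk a ⁻¹' (g ⁻¹' (G : Set X))) ∂μ1 = 1 := by
    rw [← Measure.prod_apply (hg hG)]; exact hPg
  have hFle : ∀ a, μ2 (Prod.mk a ⁻¹' (g ⁻¹' (G : Set X))) ≤ 1 := fun a => prob_le_one
  have hF1 : ∀ᵐ a ∂μ1, μ2 (Prod.mk a ⁻¹' (g ⁻¹' (G : Set X))) = 1 := by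
    have hsub : ∫⁻ a, (1 - μ2 (Prod.mk a ⁻¹' (g ⁻¹' (G : Set X)))) ∂μ1 = 0 := by
      rw [lintegral_sub hmeasF (by rw [hintF]; exact ENNReal.one_ne_top)
        (Filter.Eventually.of_forall hFle), hintF, lintegral_one, measure_univ, tsub_self]
    have h0 := (lintegral_eq_zero_iff (measurable_const.sub hmeasF)).mp hsub
    filter_upwards [h0] with a ha
    exact le_antisymm (hFle a) (tsub_eq_zero_iff_le.mp ha)
  have hae2 : ∀ᵐ a ∂μ1, ∀ᵐ y ∂μ2, a + y = g (a, y) := Measure.ae_ae_of_ae_prod heq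
  have hQ : ∀ᵐ a ∂μ1, μ2 {y | a + y ∈ (G : Set X)} = 1 := by
    filter_upwards [hF1, hae2] with a ha1 ha2
    have hcongr : ({y | a + y ∈ (G : Set X)} : Set X) =ᵐ[μ2]
        (Prod.mk a ⁻¹' (g ⁻¹' (G : Set X))) :=
      ha2.mono fun y hy => by
        show (a + y ∈ (G : Set X)) = (g (a, y) ∈ (G : Set X))
        rw [show a + y = g (a, y) from hy]
    rw [measure_congr hcongr]; exact ha1
  haveI : (ae μ1).NeBot := ae_neBot.mpr (IsProbabilityMeasure.ne_zero μ1)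
  obtain ⟨a₀, ha₀⟩ := hQ.exists
  have hQmeas : ∀ a : X, MeasurableSet {y : X | a + y ∈ (G : Set X)} := fun a =>
    (continuous_const.add continuous_id).measurable hG
  have hTmeas : MeasurableSet {a : X | a - a₀ ∈ (G : Set X)} :=
    (continuous_id.sub continuous_const).measurable hG
  -- μ1 is concentrated on the coset a₀ + G
  have hT : μ1 {a : X | a - a₀ ∈ (G : Set X)} = 1 := by
    have hmem : ∀ᵐ a ∂μ1, a - a₀ ∈ (G : Set X) := by
      filter_upwards [hQ] with a ha
      have h1 : μ2 ({y | a + y ∈ (G : Set X)}ᶜ) = 0 := (prob_compl_eq_zero_iff (hQmeas a)).mpr ha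
      have h2 : μ2 ({y | a₀ + y ∈ (G : Set X)}ᶜ) = 0 :=
        (prob_compl_eq_zero_iff (hQmeas a₀)).mpr ha₀
      have hu : μ2 ({y | a + y ∈ (G : Set X)}ᶜ ∪ {y | a₀ + y ∈ (G : Set X)}ᶜ) = 0 :=
        le_antisymm (le_trans (measure_union_le _ _) (by rw [h1, h2]; simp)) zero_le'
      have hne : ({y | a + y ∈ (G : Set X)}ᶜ ∪ {y | a₀ + y ∈ (G : Set X)}ᶜ) ≠ Set.univ := by
        intro hcontra
        rw [hcontra, measure_univ] at hu
        exact one_ne_zero hu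
      obtain ⟨y, hy⟩ := Set.ne_univ_iff_exists_notMem _ |>.mp hne
      simp only [Set.mem_union, Set.mem_compl_iff, Set.mem_setOf_eq, not_or, not_not] at hy
      have hsub := G.sub_mem hy.1 hy.2
      have : a - a₀ = (a + y) - (a₀ + y) := by abel
      rw [this]; exact hsub
    rw [← prob_compl_eq_zero_iff hTmeas]
    rw [ae_iff] at hmem
    exact hmem
  refine ⟨-a₀, ?_, ?_, ?_⟩
  · intro B hB hBG
    rw [conv_dirac_eq_map μ1 (-a₀),
      Measure.map_apply (continuous_add_right (-a₀)).measurable hB]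
    refine measure_mono_null ?_ ((prob_compl_eq_zero_iff hTmeas).mpr hT)
    intro a haB
    simp only [Set.mem_preimage] at haB
    simp only [Set.mem_compl_iff, Set.mem_setOf_eq]
    intro haG
    have : a - a₀ ∈ B ∩ (G : Set X) := ⟨by rwa [sub_eq_add_neg], haG⟩
    rw [hBG] at this
    exact this
  · intro B hB hBG
    rw [conv_dirac_eq_map μ2 (-(-a₀)),
      Measure.map_apply (continuous_add_right (-(-a₀))).measurable hB]
    refine measure_mono_null ?_ ((prob_compl_eq_zero_iff (hQmeas a₀)).mpr ha₀)
    intro y hyB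
    simp only [Set.mem_preimage, neg_neg] at hyB
    simp only [Set.mem_compl_iff, Set.mem_setOf_eq]
    intro hyG
    have : y + a₀ ∈ B ∩ (G : Set X) := ⟨hyB, by rwa [add_comm]⟩
    rw [hBG] at this
    exact this
  · -- the convolution identity
    rw [conv_dirac_eq_map μ1 (-a₀), conv_dirac_eq_map μ2 (-(-a₀))]
    set f1 : X → X := (· + (-a₀)) with hf1
    set f2 : X → X := (· + (-(-a₀))) with hf2
    have hm1 : Measurable f1 := (continuous_add_right (-a₀)).measurable
    have hm2 : Measurable f2 := (continuous_add_right (-(-a₀))).measurable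
    have hprod : (μ1.map f1).prod (μ2.map f2) = P.map (Prod.map f1 f2) :=
      Measure.map_prod_map _ _ hm1 hm2
    set e : (X × X) ≃ᵐ (X × X) :=
      (Homeomorph.addRight (-a₀)).toMeasurableEquiv.prodCongr
        (Homeomorph.addRight (-(-a₀))).toMeasurableEquiv with hedef
    have hecoe : (Prod.map f1 f2) = ⇑e := rfl
    have hcomp : (fun p : X × X => p.1 + p.2) ∘ ⇑e = fun p : X × X => p.1 + p.2 := by
      funext p
      show (p.1 + -a₀) + (p.2 + -(-a₀)) = p.1 + p.2
      abel
    have hAEe : AEMeasurable (fun p : X × X => p.1 + p.2) (P.map ⇑e) := by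
      rw [e.measurableEmbedding.aemeasurable_map_iff, hcomp]
      exact hAE
    rw [show (μ1.map f1).conv (μ2.map f2)
        = Measure.map (fun p : X × X => p.1 + p.2) ((μ1.map f1).prod (μ2.map f2)) from rfl,
      hprod, hecoe,
      AEMeasurable.map_map_of_aemeasurable hAEe e.measurable.aemeasurable, hcomp]
    exact hconv
end

section
/- Let ξ1 and ξ2 be independent random variables with values in the circle group 𝕋 and distributions μ1, μ2 whose characteristic functions do not vanish. If the sum ξ1 + ξ2 and the difference ξ1 − ξ2 (multiplicatively, ξ1ξ2 and ξ1ξ2⁻¹) are independent, then there exist σ ≥ 0, κ ∈ ℝ and θ1, θ2 ∈ [0, 2π) such that μ̂1(n) = exp(−σ n² + i θ1 n + κ(1 − (−1)^n)) and μ̂2(n) = exp(−σ n² + i θ2 n − κ(1 − (−1)^n)) for all n ∈ ℤ. -/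
/- Lemma 4 (Baryshnikov–Eisenberg–Stadje): description of the distributions on the circle
group `𝕋` with nonvanishing characteristic functions for which the sum and the difference
of two independent random variables are independent. -/

open MeasureTheory ProbabilityTheory

noncomputable section

instance : MeasurableSpace Circle := borel Circle
instance : BorelSpace Circle := ⟨rfl⟩

/-- Characteristic function `μ̂(n) = ∫_𝕋 z^n dμ(z)` of a measure on the circle group. -/
noncomputable def cfT (μ : Measure Circle) (n : ℤ) : ℂ :=
  ∫ z, (z : ℂ) ^ n ∂μ

section Aux

set_option maxHeartbeats 1000000

open Complex

/-! ### Elementary facts about `(-1 : ℂ) ^ n` for `n : ℤ` -/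

lemma aux_neg_one_zpow_sq (n : ℤ) : ((-1:ℂ))^n * ((-1:ℂ))^n = 1 := by
  rw [← zpow_add₀ (by norm_num : (-1:ℂ) ≠ 0), ← two_mul, zpow_mul]
  norm_num

lemma aux_neg_one_zpow_neg (n : ℤ) : ((-1:ℂ))^(-n) = ((-1:ℂ))^n := by
  rw [zpow_neg, inv_eq_of_mul_eq_one_left (aux_neg_one_zpow_sq n)]

lemma aux_neg_one_zpow_conj (n : ℤ) : (starRingEnd ℂ) (((-1:ℂ))^n) = ((-1:ℂ))^n := by
  rw [show ((-1:ℂ)) = ((-1:ℝ):ℂ) by norm_num, ← Complex.ofReal_zpow, Complex.conj_ofReal]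

lemma aux_neg_one_zpow_add_one (m : ℤ) : ((-1:ℂ))^(m+1) = -((-1:ℂ))^m := by
  rw [zpow_add_one₀ (by norm_num : (-1:ℂ) ≠ 0)]; ring

lemma aux_neg_one_zpow_sub_one (m : ℤ) : ((-1:ℂ))^(m-1) = -((-1:ℂ))^m := by
  rw [zpow_sub_one₀ (by norm_num : (-1:ℂ) ≠ 0)]; norm_num

lemma aux_neg_one_zpow_neg_one : ((-1:ℂ))^(-1:ℤ) = -1 := by
  rw [zpow_neg, zpow_one]; norm_num

/-! ### The candidate characteristic function and its properties -/

/-- The candidate characteristic function `exp (-σ n² + i θ n + κ (1 - (-1)ⁿ))`. -/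
noncomputable def Fc (σ κ θ : ℝ) (n : ℤ) : ℂ :=
  Complex.exp (-(σ : ℂ) * n ^ 2 + Complex.I * θ * n + (κ : ℂ) * (1 - (-1) ^ n))

lemma Fc_ne (σ κ θ : ℝ) (n : ℤ) : Fc σ κ θ n ≠ 0 := Complex.exp_ne_zero _

lemma Fc_zero (σ κ θ : ℝ) : Fc σ κ θ 0 = 1 := by
  simp [Fc]

lemma Fc_one (σ κ θ : ℝ) : Fc σ κ θ 1 = Complex.exp (((-σ + 2*κ : ℝ) : ℂ) + θ * I) := by
  rw [Fc]
  congr 1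
  rw [zpow_one]
  push_cast
  ring

lemma Fc_neg (σ κ θ : ℝ) (n : ℤ) : Fc σ κ θ (-n) = (starRingEnd ℂ) (Fc σ κ θ n) := by
  rw [Fc, Fc, ← Complex.exp_conj]
  congr 1
  simp only [map_add, map_mul, map_sub, map_neg, map_one, Complex.conj_I, Complex.conj_ofReal,
    map_pow, map_intCast, aux_neg_one_zpow_conj, aux_neg_one_zpow_neg]
  push_cast
  ring

lemma Fc_rec (σ κ θ θ' : ℝ) (m : ℤ) :
    Fc σ κ θ (m+1) * Fc σ (-κ) θ' (m-1) =
      Fc σ κ θ m * Fc σ (-κ) θ' m * (Fc σ κ θ 1 * Fc σ (-κ) θ' (-1)) := by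
  simp only [Fc, ← Complex.exp_add]
  congr 1
  rw [aux_neg_one_zpow_add_one, aux_neg_one_zpow_sub_one, zpow_one, aux_neg_one_zpow_neg_one]
  push_cast
  ring

/-! ### The purely algebraic core of the proof -/

lemma main_alg (f g : ℤ → ℂ)
    (hf0 : f 0 = 1) (hg0 : g 0 = 1)
    (hfc : ∀ n, f (-n) = (starRingEnd ℂ) (f n)) (hgc : ∀ n, g (-n) = (starRingEnd ℂ) (g n))
    (hf1 : ‖f 1‖ ≤ 1) (hg1 : ‖g 1‖ ≤ 1)
    (hfne : ∀ n, f n ≠ 0) (hgne : ∀ n, g n ≠ 0)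
    (E : ∀ m n : ℤ, f (m+n) * g (m-n) = f m * g m * (f n * g (-n))) :
    ∃ σ κ θ1 θ2 : ℝ,
      0 ≤ σ ∧ 0 ≤ θ1 ∧ θ1 < 2 * Real.pi ∧ 0 ≤ θ2 ∧ θ2 < 2 * Real.pi ∧
      (∀ n : ℤ, f n = Complex.exp (-(σ : ℂ) * n ^ 2 + Complex.I * θ1 * n + (κ : ℂ) * (1 - (-1) ^ n))) ∧
      (∀ n : ℤ, g n = Complex.exp (-(σ : ℂ) * n ^ 2 + Complex.I * θ2 * n - (κ : ℂ) * (1 - (-1) ^ n))) := by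
  have hpi := Real.pi_pos
  have hr1 : 0 < ‖f 1‖ := norm_pos_iff.mpr (hfne 1)
  have hr2 : 0 < ‖g 1‖ := norm_pos_iff.mpr (hgne 1)
  have hr1le : ‖f 1‖ ≤ 1 := by exact hf1
  have hr2le : ‖g 1‖ ≤ 1 := by exact hg1
  have hlog1 : Real.log (‖f 1‖) ≤ 0 := Real.log_nonpos hr1.le hr1le
  have hlog2 : Real.log (‖g 1‖) ≤ 0 := Real.log_nonpos hr2.le hr2le
  set l1 := Real.log (‖f 1‖) with hl1
  set l2 := Real.log (‖g 1‖) with hl2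
  set σ : ℝ := -(l1 + l2) / 2 with hσdef
  set κ : ℝ := (l1 - l2) / 4 with hκdef
  set θ1 : ℝ := if 0 ≤ (f 1).arg then (f 1).arg else (f 1).arg + 2 * Real.pi with hθ1def
  set θ2 : ℝ := if 0 ≤ (g 1).arg then (g 1).arg else (g 1).arg + 2 * Real.pi with hθ2def
  have hσ : 0 ≤ σ := by rw [hσdef]; linarith
  have hθ1a : 0 ≤ θ1 ∧ θ1 < 2 * Real.pi := by
    rw [hθ1def]
    have h1 := Complex.arg_le_pi (f 1)
    have h2 := Complex.neg_pi_lt_arg (f 1)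
    split_ifs with h <;> constructor <;> linarith
  have hθ2a : 0 ≤ θ2 ∧ θ2 < 2 * Real.pi := by
    rw [hθ2def]
    have h1 := Complex.arg_le_pi (g 1)
    have h2 := Complex.neg_pi_lt_arg (g 1)
    split_ifs with h <;> constructor <;> linarith
  have hexpθ1 : Complex.exp ((θ1:ℂ) * I) = Complex.exp ((f 1).arg * I) := by
    rw [hθ1def]; split_ifs with h
    · rfl
    · push_cast
      rw [add_mul, Complex.exp_add]
      rw [show ((2:ℂ) * Real.pi * I) = 2 * Real.pi * I by ring, Complex.exp_two_pi_mul_I]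
      ring
  have hexpθ2 : Complex.exp ((θ2:ℂ) * I) = Complex.exp ((g 1).arg * I) := by
    rw [hθ2def]; split_ifs with h
    · rfl
    · push_cast
      rw [add_mul, Complex.exp_add]
      rw [show ((2:ℂ) * Real.pi * I) = 2 * Real.pi * I by ring, Complex.exp_two_pi_mul_I]
      ring
  have hF1 : Fc σ κ θ1 1 = f 1 := by
    rw [Fc_one, show (-σ + 2*κ : ℝ) = l1 by rw [hσdef, hκdef]; ring]
    rw [Complex.exp_add, hexpθ1, ← Complex.ofReal_exp, hl1, Real.exp_log hr1]
    exact Complex.norm_mul_exp_arg_mul_I (f 1)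
  have hG1 : Fc σ (-κ) θ2 1 = g 1 := by
    rw [Fc_one, show (-σ + 2*(-κ) : ℝ) = l2 by rw [hσdef, hκdef]; ring]
    rw [Complex.exp_add, hexpθ2, ← Complex.ofReal_exp, hl2, Real.exp_log hr2]
    exact Complex.norm_mul_exp_arg_mul_I (g 1)
  have hFneg1 : f (-1) = Fc σ κ θ1 (-1) := by
    rw [hfc 1, Fc_neg, hF1]
  have hGneg1 : g (-1) = Fc σ (-κ) θ2 (-1) := by
    rw [hgc 1, Fc_neg, hG1]
  have hA : ∀ m : ℤ, f (m+1) * g (m-1) = f m * g m * (f 1 * g (-1)) := fun m => E m 1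
  have hB : ∀ m : ℤ, f (m-1) * g (m+1) = f m * g m * (f (-1) * g 1) := by
    intro m
    have h := E m (-1)
    rw [show m + -1 = m - 1 by ring, show m - -1 = m + 1 by ring, neg_neg] at h
    exact h
  have RB : ∀ m : ℤ, Fc σ κ θ1 (m-1) * Fc σ (-κ) θ2 (m+1) =
      Fc σ κ θ1 m * Fc σ (-κ) θ2 m * (Fc σ κ θ1 (-1) * Fc σ (-κ) θ2 1) := by
    intro m
    have h := Fc_rec σ (-κ) θ2 θ1 m
    rw [neg_neg] at h
    linear_combination h
  have key : ∀ k : ℕ, (f (k:ℤ) = Fc σ κ θ1 (k:ℤ) ∧ g (k:ℤ) = Fc σ (-κ) θ2 (k:ℤ)) ∧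
      (f ((k:ℤ)+1) = Fc σ κ θ1 ((k:ℤ)+1) ∧ g ((k:ℤ)+1) = Fc σ (-κ) θ2 ((k:ℤ)+1)) := by
    intro k
    induction k with
    | zero =>
      refine ⟨⟨?_, ?_⟩, ?_, ?_⟩
      · rw [Int.natCast_zero, hf0, Fc_zero]
      · rw [Int.natCast_zero, hg0, Fc_zero]
      · rw [Int.natCast_zero, zero_add, hF1]
      · rw [Int.natCast_zero, zero_add, hG1]
    | succ p ih =>
      obtain ⟨⟨hfp, hgp⟩, hfp1, hgp1⟩ := ih
      have hcast : ((p+1 : ℕ) : ℤ) = (p:ℤ) + 1 := by push_cast; ring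
      refine ⟨⟨?_, ?_⟩, ?_, ?_⟩
      · rw [hcast]; exact hfp1
      · rw [hcast]; exact hgp1
      · rw [hcast]
        have e1 := hA ((p:ℤ)+1)
        have e2 := Fc_rec σ κ θ1 θ2 ((p:ℤ)+1)
        rw [show ((p:ℤ)+1) - 1 = (p:ℤ) by ring] at e1 e2
        rw [hfp1, hgp1, hgp, ← hF1, hGneg1] at e1
        exact mul_right_cancel₀ (Fc_ne σ (-κ) θ2 (p:ℤ)) (e1.trans e2.symm)
      · rw [hcast]
        have e3 := hB ((p:ℤ)+1)
        have e4 := RB ((p:ℤ)+1)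
        rw [show ((p:ℤ)+1) - 1 = (p:ℤ) by ring] at e3 e4
        rw [hfp, hfp1, hgp1, ← hG1, hFneg1] at e3
        exact mul_left_cancel₀ (Fc_ne σ κ θ1 (p:ℤ)) (e3.trans e4.symm)
  have hall : ∀ n : ℤ, f n = Fc σ κ θ1 n ∧ g n = Fc σ (-κ) θ2 n := by
    intro n
    obtain ⟨k, rfl | rfl⟩ := Int.eq_nat_or_neg n
    · exact (key k).1
    · obtain ⟨hk1, hk2⟩ := (key k).1
      refine ⟨?_, ?_⟩
      · rw [hfc, hk1, Fc_neg]
      · rw [hgc, hk2, Fc_neg]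
  refine ⟨σ, κ, θ1, θ2, hσ, hθ1a.1, hθ1a.2, hθ2a.1, hθ2a.2, ?_, ?_⟩
  · intro n
    exact (hall n).1
  · intro n
    rw [(hall n).2, Fc]
    congr 1
    push_cast
    ring

/-! ### Circle coercion and integration facts -/

lemma circle_coe_pow (z : Circle) (k : ℕ) : ((z ^ k : Circle) : ℂ) = (z : ℂ) ^ k :=
  map_pow Circle.coeHom z k

lemma circle_coe_zpow (z : Circle) (n : ℤ) : ((z ^ n : Circle) : ℂ) = (z : ℂ) ^ n := by
  cases n with
  | ofNat k => simp [zpow_natCast, circle_coe_pow]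
  | negSucc k => simp [zpow_negSucc, circle_coe_pow]

lemma circle_zpow_cont (n : ℤ) : Continuous (fun z : Circle => (z : ℂ) ^ n) := by
  have : (fun z : Circle => (z : ℂ) ^ n) = (fun z : Circle => ((z ^ n : Circle) : ℂ)) := by
    funext z; rw [circle_coe_zpow]
  rw [this]
  exact continuous_subtype_val.comp (continuous_zpow n)

lemma norm_circle_zpow (z : Circle) (n : ℤ) : ‖(z : ℂ) ^ n‖ = 1 := by
  rw [norm_zpow, Circle.norm_coe, one_zpow]

lemma cfT_zero (μ : Measure Circle) [IsProbabilityMeasure μ] : cfT μ 0 = 1 := by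
  simp [cfT]

lemma cfT_neg (μ : Measure Circle) (n : ℤ) : cfT μ (-n) = (starRingEnd ℂ) (cfT μ n) := by
  rw [cfT, cfT, ← integral_conj]
  congr 1
  funext z
  rw [zpow_neg, Complex.inv_def]
  have : Complex.normSq ((z:ℂ)^n) = 1 := by
    rw [Complex.normSq_eq_norm_sq, norm_circle_zpow]; norm_num
  rw [this]
  simp

lemma norm_cfT_le (μ : Measure Circle) [IsProbabilityMeasure μ] (n : ℤ) : ‖cfT μ n‖ ≤ 1 := by
  rw [cfT]
  calc ‖∫ z, (z : ℂ) ^ n ∂μ‖ ≤ ∫ z, ‖(z : ℂ) ^ n‖ ∂μ := norm_integral_le_integral_norm _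
  _ = 1 := by simp only [norm_circle_zpow]; simp

lemma indep_integral_mul_complex {Ω : Type*} [MeasurableSpace Ω] {μ : Measure Ω}
    [IsProbabilityMeasure μ] {X Y : Ω → ℂ} (h : IndepFun X Y μ)
    (hX : Integrable X μ) (hY : Integrable Y μ) :
    ∫ ω, X ω * Y ω ∂μ = (∫ ω, X ω ∂μ) * ∫ ω, Y ω ∂μ := by
  have hXY : Integrable (fun ω => X ω * Y ω) μ := h.integrable_mul hX hY
  have hre : IndepFun (fun ω => (X ω).re) (fun ω => (Y ω).re) μ :=
    h.comp Complex.measurable_re Complex.measurable_re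
  have hri : IndepFun (fun ω => (X ω).re) (fun ω => (Y ω).im) μ :=
    h.comp Complex.measurable_re Complex.measurable_im
  have hir : IndepFun (fun ω => (X ω).im) (fun ω => (Y ω).re) μ :=
    h.comp Complex.measurable_im Complex.measurable_re
  have hii : IndepFun (fun ω => (X ω).im) (fun ω => (Y ω).im) μ :=
    h.comp Complex.measurable_im Complex.measurable_im
  have hXre : Integrable (fun ω => (X ω).re) μ := hX.re
  have hXim : Integrable (fun ω => (X ω).im) μ := hX.im
  have hYre : Integrable (fun ω => (Y ω).re) μ := hY.re
  have hYim : Integrable (fun ω => (Y ω).im) μ := hY.im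
  have e1 : ∫ ω, (X ω).re * (Y ω).re ∂μ = (∫ ω, (X ω).re ∂μ) * ∫ ω, (Y ω).re ∂μ :=
    hre.integral_fun_mul_eq_mul_integral hXre.aestronglyMeasurable hYre.aestronglyMeasurable
  have e2 : ∫ ω, (X ω).im * (Y ω).im ∂μ = (∫ ω, (X ω).im ∂μ) * ∫ ω, (Y ω).im ∂μ :=
    hii.integral_fun_mul_eq_mul_integral hXim.aestronglyMeasurable hYim.aestronglyMeasurable
  have e3 : ∫ ω, (X ω).re * (Y ω).im ∂μ = (∫ ω, (X ω).re ∂μ) * ∫ ω, (Y ω).im ∂μ :=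
    hri.integral_fun_mul_eq_mul_integral hXre.aestronglyMeasurable hYim.aestronglyMeasurable
  have e4 : ∫ ω, (X ω).im * (Y ω).re ∂μ = (∫ ω, (X ω).im ∂μ) * ∫ ω, (Y ω).re ∂μ :=
    hir.integral_fun_mul_eq_mul_integral hXim.aestronglyMeasurable hYre.aestronglyMeasurable
  have i1 : Integrable (fun ω => (X ω).re * (Y ω).re) μ := hre.integrable_mul hXre hYre
  have i2 : Integrable (fun ω => (X ω).im * (Y ω).im) μ := hii.integrable_mul hXim hYim
  have i3 : Integrable (fun ω => (X ω).re * (Y ω).im) μ := hri.integrable_mul hXre hYim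
  have i4 : Integrable (fun ω => (X ω).im * (Y ω).re) μ := hir.integrable_mul hXim hYre
  have kre := integral_re hXY
  have kim := integral_im hXY
  have kXre := integral_re hX
  have kXim := integral_im hX
  have kYre := integral_re hY
  have kYim := integral_im hY
  simp only [RCLike.re_to_complex, RCLike.im_to_complex] at kre kim kXre kXim kYre kYim
  apply Complex.ext
  · rw [← kre]
    have : (fun ω => (X ω * Y ω).re) = fun ω => (X ω).re * (Y ω).re - (X ω).im * (Y ω).im := by
      funext ω; simp [Complex.mul_re]
    rw [this, integral_sub i1 i2]
    rw [e1, e2, Complex.mul_re, ← kXre, ← kYre, ← kXim, ← kYim]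
  · rw [← kim]
    have : (fun ω => (X ω * Y ω).im) = fun ω => (X ω).re * (Y ω).im + (X ω).im * (Y ω).re := by
      funext ω; simp [Complex.mul_im]
    rw [this, integral_add i3 i4]
    rw [e3, e4, Complex.mul_im, ← kXre, ← kYre, ← kXim, ← kYim]

variable {Ω : Type*} [MeasureSpace Ω] [IsProbabilityMeasure (ℙ : Measure Ω)]

lemma integrable_circle_zpow {X : Ω → Circle} (hm : Measurable X) (n : ℤ) :
    Integrable (fun ω => (X ω : ℂ) ^ n) ℙ := by
  refine (integrable_const (1 : ℝ)).mono' ?_ ?_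
  · exact ((circle_zpow_cont n).measurable.comp hm).aestronglyMeasurable
  · filter_upwards with ω
    rw [norm_circle_zpow]

lemma cfT_map_eq {X : Ω → Circle} (hm : Measurable X) (n : ℤ) :
    cfT (Measure.map X ℙ) n = ∫ ω, (X ω : ℂ) ^ n ∂ℙ := by
  rw [cfT, integral_map hm.aemeasurable]
  exact (circle_zpow_cont n).measurable.aestronglyMeasurable

lemma indep_circle_integral_mul {X Y : Ω → Circle} (hmX : Measurable X) (hmY : Measurable Y)
    (h : IndepFun X Y ℙ) (a b : ℤ) :
    ∫ ω, (X ω : ℂ) ^ a * (Y ω : ℂ) ^ b ∂ℙ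
      = (∫ ω, (X ω : ℂ) ^ a ∂ℙ) * ∫ ω, (Y ω : ℂ) ^ b ∂ℙ :=
  indep_integral_mul_complex
    (h.comp (circle_zpow_cont a).measurable (circle_zpow_cont b).measurable)
    (integrable_circle_zpow hmX a) (integrable_circle_zpow hmY b)

end Aux

set_option maxHeartbeats 1000000 in
theorem statement5
    {Ω : Type*} [MeasureSpace Ω] [IsProbabilityMeasure (ℙ : Measure Ω)]
    (ξ1 ξ2 : Ω → Circle) (hm1 : Measurable ξ1) (hm2 : Measurable ξ2)
    (hindep : IndepFun ξ1 ξ2 ℙ)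
    (hcf1 : ∀ n : ℤ, cfT (Measure.map ξ1 ℙ) n ≠ 0)
    (hcf2 : ∀ n : ℤ, cfT (Measure.map ξ2 ℙ) n ≠ 0)
    (hL : IndepFun (fun ω => ξ1 ω * ξ2 ω) (fun ω => ξ1 ω * (ξ2 ω)⁻¹) ℙ) :
    ∃ σ κ θ1 θ2 : ℝ,
      0 ≤ σ ∧ 0 ≤ θ1 ∧ θ1 < 2 * Real.pi ∧ 0 ≤ θ2 ∧ θ2 < 2 * Real.pi ∧
      (∀ n : ℤ, cfT (Measure.map ξ1 ℙ) n =
        Complex.exp (-(σ : ℂ) * n ^ 2 + Complex.I * θ1 * n + (κ : ℂ) * (1 - (-1) ^ n))) ∧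
      (∀ n : ℤ, cfT (Measure.map ξ2 ℙ) n =
        Complex.exp (-(σ : ℂ) * n ^ 2 + Complex.I * θ2 * n - (κ : ℂ) * (1 - (-1) ^ n))) := by
  have hP1 : IsProbabilityMeasure (Measure.map ξ1 ℙ) :=
    Measure.isProbabilityMeasure_map hm1.aemeasurable
  have hP2 : IsProbabilityMeasure (Measure.map ξ2 ℙ) :=
    Measure.isProbabilityMeasure_map hm2.aemeasurable
  have hm12 : Measurable (fun ω => ξ1 ω * ξ2 ω) := hm1.mul hm2
  have hm12' : Measurable (fun ω => ξ1 ω * (ξ2 ω)⁻¹) := hm1.mul hm2.inv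
  -- the key functional equation
  have E : ∀ m n : ℤ, cfT (Measure.map ξ1 ℙ) (m+n) * cfT (Measure.map ξ2 ℙ) (m-n) =
      cfT (Measure.map ξ1 ℙ) m * cfT (Measure.map ξ2 ℙ) m *
        (cfT (Measure.map ξ1 ℙ) n * cfT (Measure.map ξ2 ℙ) (-n)) := by
    intro m n
    have point1 : ∀ ω, ((ξ1 ω * ξ2 ω : Circle) : ℂ) ^ m * ((ξ1 ω * (ξ2 ω)⁻¹ : Circle) : ℂ) ^ n
        = (ξ1 ω : ℂ) ^ (m+n) * (ξ2 ω : ℂ) ^ (m-n) := by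
      intro ω
      rw [← circle_coe_zpow, ← circle_coe_zpow, ← circle_coe_zpow, ← circle_coe_zpow,
        ← Circle.coe_mul, ← Circle.coe_mul]
      congr 1
      rw [mul_zpow, mul_zpow, zpow_add, zpow_sub, inv_zpow]
      exact mul_mul_mul_comm _ _ _ _
    have point2 : ∀ ω, ((ξ1 ω * ξ2 ω : Circle) : ℂ) ^ m
        = (ξ1 ω : ℂ) ^ m * (ξ2 ω : ℂ) ^ m := by
      intro ω
      rw [← circle_coe_zpow, ← circle_coe_zpow, ← circle_coe_zpow, ← Circle.coe_mul]
      congr 1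
      rw [mul_zpow]
    have point3 : ∀ ω, ((ξ1 ω * (ξ2 ω)⁻¹ : Circle) : ℂ) ^ n
        = (ξ1 ω : ℂ) ^ n * (ξ2 ω : ℂ) ^ (-n) := by
      intro ω
      rw [← circle_coe_zpow, ← circle_coe_zpow, ← circle_coe_zpow, ← Circle.coe_mul]
      congr 1
      rw [mul_zpow, inv_zpow, zpow_neg]
    calc cfT (Measure.map ξ1 ℙ) (m+n) * cfT (Measure.map ξ2 ℙ) (m-n)
        = (∫ ω, (ξ1 ω : ℂ) ^ (m+n) ∂ℙ) * ∫ ω, (ξ2 ω : ℂ) ^ (m-n) ∂ℙ := by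
          rw [cfT_map_eq hm1, cfT_map_eq hm2]
      _ = ∫ ω, (ξ1 ω : ℂ) ^ (m+n) * (ξ2 ω : ℂ) ^ (m-n) ∂ℙ :=
          (indep_circle_integral_mul hm1 hm2 hindep _ _).symm
      _ = ∫ ω, ((ξ1 ω * ξ2 ω : Circle) : ℂ) ^ m * ((ξ1 ω * (ξ2 ω)⁻¹ : Circle) : ℂ) ^ n ∂ℙ := by
          congr 1; funext ω; rw [point1]
      _ = (∫ ω, ((ξ1 ω * ξ2 ω : Circle) : ℂ) ^ m ∂ℙ) *
            ∫ ω, ((ξ1 ω * (ξ2 ω)⁻¹ : Circle) : ℂ) ^ n ∂ℙ :=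
          indep_circle_integral_mul hm12 hm12' hL m n
      _ = (∫ ω, (ξ1 ω : ℂ) ^ m * (ξ2 ω : ℂ) ^ m ∂ℙ) *
            ∫ ω, (ξ1 ω : ℂ) ^ n * (ξ2 ω : ℂ) ^ (-n) ∂ℙ := by
          congr 1
          · congr 1; funext ω; rw [point2]
          · congr 1; funext ω; rw [point3]
      _ = cfT (Measure.map ξ1 ℙ) m * cfT (Measure.map ξ2 ℙ) m *
            (cfT (Measure.map ξ1 ℙ) n * cfT (Measure.map ξ2 ℙ) (-n)) := by
          rw [indep_circle_integral_mul hm1 hm2 hindep m m,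
            indep_circle_integral_mul hm1 hm2 hindep n (-n),
            cfT_map_eq hm1, cfT_map_eq hm2, cfT_map_eq hm1, cfT_map_eq hm2]
  exact main_alg (cfT (Measure.map ξ1 ℙ)) (cfT (Measure.map ξ2 ℙ))
    (cfT_zero _) (cfT_zero _) (cfT_neg _) (cfT_neg _)
    (norm_cfT_le _ 1) (norm_cfT_le _ 1) hcf1 hcf2 E
end
end

section
/- Let ξ1, ξ2, ξ3 be independent random variables with values in the circle group 𝕋 and distributions μ1, μ2, μ3 whose characteristic functions do not vanish. Let ε_ij ∈ {1, −1} for i, j = 1, 2, 3 (these are exactly the topological automorphisms of 𝕋, acting by z ↦ z^{ε}). If the linear statistics L1 = ε11ξ1 + ε12ξ2 + ε13ξ3, L2 = ε21ξ1 + ε22ξ2 + ε23ξ3 and L3 = ε31ξ1 + ε32ξ2 + ε33ξ3 (multiplicatively, L_i = ξ1^{ε_i1} ξ2^{ε_i2} ξ3^{ε_i3}) are independent, then all three μ_j are Dirac measures. -/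
/- Lemma 5: on the circle group `𝕋`, if three linear statistics (with automorphism
coefficients `z ↦ z^{±1}`) of three independent random variables with nonvanishing
characteristic functions are independent, then all three distributions are degenerate. -/

open MeasureTheory ProbabilityTheory

noncomputable section

namespace Statement6Aux

lemma continuous_circle_coe : Continuous ((↑) : Circle → ℂ) := continuous_subtype_val

lemma coe_zpow' (z : Circle) (n : ℤ) : ((z ^ n : Circle) : ℂ) = (z : ℂ) ^ n :=
  map_zpow Circle.coeHom z n

lemma measurable_charCircle (n : ℤ) : Measurable fun z : Circle => (z : ℂ) ^ n := by
  have h : Continuous fun z : Circle => ((z ^ n : Circle) : ℂ) :=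
    continuous_circle_coe.comp (continuous_zpow n)
  simpa only [coe_zpow'] using h.measurable

lemma measurable_circle_coe : Measurable (fun z : Circle => (z : ℂ)) := by
  have h := measurable_charCircle 1
  simpa using h

lemma indepFun_integral_mul_ℂ {Ω : Type*} {mΩ : MeasurableSpace Ω} {μ : Measure Ω}
    [IsProbabilityMeasure μ] {X Y : Ω → ℂ} (h : IndepFun X Y μ)
    (hX : Measurable X) (hY : Measurable Y) :
    ∫ ω, X ω * Y ω ∂μ = (∫ ω, X ω ∂μ) * ∫ ω, Y ω ∂μ := by
  have hmap := (indepFun_iff_map_prod_eq_prod_map_map hX.aemeasurable hY.aemeasurable).mp h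
  haveI : IsProbabilityMeasure (μ.map X) := Measure.isProbabilityMeasure_map hX.aemeasurable
  haveI : IsProbabilityMeasure (μ.map Y) := Measure.isProbabilityMeasure_map hY.aemeasurable
  have hpair : AEMeasurable (fun ω => (X ω, Y ω)) μ := (hX.prodMk hY).aemeasurable
  calc ∫ ω, X ω * Y ω ∂μ
      = ∫ p : ℂ × ℂ, p.1 * p.2 ∂(μ.map (fun ω => (X ω, Y ω))) := by
        rw [integral_map (f := fun p : ℂ × ℂ => p.1 * p.2) hpair ((continuous_fst.mul continuous_snd).aestronglyMeasurable)]
    _ = ∫ p : ℂ × ℂ, p.1 * p.2 ∂((μ.map X).prod (μ.map Y)) := by rw [hmap]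
    _ = (∫ x : ℂ, x ∂(μ.map X)) * ∫ y : ℂ, y ∂(μ.map Y) :=
        integral_prod_mul (fun x => x) (fun y => y)
    _ = (∫ ω, X ω ∂μ) * ∫ ω, Y ω ∂μ := by
        rw [integral_map (f := fun x : ℂ => x) hX.aemeasurable aestronglyMeasurable_id,
          integral_map (f := fun x : ℂ => x) hY.aemeasurable aestronglyMeasurable_id]

lemma integral_prod_three {Ω : Type*} {mΩ : MeasurableSpace Ω} {μ : Measure Ω}
    [IsProbabilityMeasure μ] {η : Fin 3 → Ω → Circle} (hm : ∀ i, Measurable (η i))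
    (hind : iIndepFun η μ) (n : Fin 3 → ℤ) :
    ∫ ω, (η 0 ω : ℂ) ^ n 0 * (η 1 ω : ℂ) ^ n 1 * (η 2 ω : ℂ) ^ n 2 ∂μ
      = (∫ ω, (η 0 ω : ℂ) ^ n 0 ∂μ) * (∫ ω, (η 1 ω : ℂ) ^ n 1 ∂μ)
          * ∫ ω, (η 2 ω : ℂ) ^ n 2 ∂μ := by
  have h01 : IndepFun (η 0) (η 1) μ := hind.indepFun (by decide)
  have h2 : IndepFun (fun ω => (η 0 ω, η 1 ω)) (η 2) μ :=
    hind.indepFun_prodMk hm 0 1 2 (by decide) (by decide)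
  have hφ : Measurable (fun q : Circle × Circle => (q.1 : ℂ) ^ n 0 * (q.2 : ℂ) ^ n 1) :=
    ((measurable_charCircle (n 0)).comp measurable_fst).mul
      ((measurable_charCircle (n 1)).comp measurable_snd)
  have hc1 : IndepFun (fun ω => (η 0 ω : ℂ) ^ n 0 * (η 1 ω : ℂ) ^ n 1)
      (fun ω => (η 2 ω : ℂ) ^ n 2) μ := h2.comp hφ (measurable_charCircle (n 2))
  have hc0 : IndepFun (fun ω => (η 0 ω : ℂ) ^ n 0) (fun ω => (η 1 ω : ℂ) ^ n 1) μ :=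
    h01.comp (measurable_charCircle (n 0)) (measurable_charCircle (n 1))
  have m0 : Measurable (fun ω => (η 0 ω : ℂ) ^ n 0) := (measurable_charCircle (n 0)).comp (hm 0)
  have m1 : Measurable (fun ω => (η 1 ω : ℂ) ^ n 1) := (measurable_charCircle (n 1)).comp (hm 1)
  have m2 : Measurable (fun ω => (η 2 ω : ℂ) ^ n 2) := (measurable_charCircle (n 2)).comp (hm 2)
  rw [indepFun_integral_mul_ℂ hc1 (m0.mul m1) m2, indepFun_integral_mul_ℂ hc0 m0 m1]

set_option maxRecDepth 40000 in
lemma exists_sign : ∀ e : Fin 3 → Fin 3 → Bool, ∃ s : Fin 3 → Bool, ∀ j : Fin 3,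
    ((if s 0 then 1 else -1) * (if e 0 j then 1 else -1)
      + (if s 1 then 1 else -1) * (if e 1 j then 1 else -1)
      + (if s 2 then 1 else -1) * (if e 2 j then 1 else -1) : ℤ) = 1
    ∨ ((if s 0 then 1 else -1) * (if e 0 j then 1 else -1)
      + (if s 1 then 1 else -1) * (if e 1 j then 1 else -1)
      + (if s 2 then 1 else -1) * (if e 2 j then 1 else -1) : ℤ) = -1 := by decide

lemma grp_collect {G : Type*} [CommGroup G] (x y z : G) (a b c d e f g h i p q r : ℤ) :
    (x^a*y^b*z^c)^p * (x^d*y^e*z^f)^q * (x^g*y^h*z^i)^r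
      = x^(a*p+d*q+g*r) * y^(b*p+e*q+h*r) * z^(c*p+f*q+i*r) := by
  simp only [mul_zpow, ← zpow_mul, zpow_add]
  ac_rfl

lemma grp_single {G : Type*} [CommGroup G] (x y z : G) (a b c p : ℤ) :
    (x^a*y^b*z^c)^p = x^(a*p) * y^(b*p) * z^(c*p) := by
  simp only [mul_zpow, ← zpow_mul]

lemma eq_one_of_re_eq_one {w : ℂ} (habs : ‖w‖ = 1) (hre : w.re = 1) : w = 1 := by
  have h2 : ‖w‖ ^ 2 = w.re * w.re + w.im * w.im := by
    rw [Complex.sq_norm]; rfl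
  rw [habs] at h2
  have him : w.im = 0 := by nlinarith
  exact Complex.ext (by simp [hre]) (by simp [him])

lemma dirac_of_norm_integral_eq_one (μ : Measure Circle) [IsProbabilityMeasure μ]
    (h : ‖∫ z : Circle, (z : ℂ) ∂μ‖ = 1) : ∃ c : Circle, μ = Measure.dirac c := by
  set m := ∫ z : Circle, (z : ℂ) ∂μ with hm
  have habs : ‖m‖ = 1 := h
  have hmem : m ∈ Submonoid.unitSphere ℂ := mem_sphere_zero_iff_norm.mpr h
  set c : Circle := ⟨m, hmem⟩ with hc
  have hconj_mul : (starRingEnd ℂ) m * m = 1 := by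
    rw [mul_comm, Complex.mul_conj]
    norm_cast
    rw [Complex.normSq_eq_norm_sq, habs, one_pow]
  have habs_all : ∀ z : Circle, ‖((starRingEnd ℂ) m * (z : ℂ))‖ = 1 := by
    intro z; simp [map_mul, habs, Circle.norm_coe]
  have hmeasre : AEStronglyMeasurable (fun z : Circle => ((starRingEnd ℂ) m * (z : ℂ)).re) μ := by
    exact (Complex.measurable_re.comp (measurable_const.mul measurable_circle_coe)).aestronglyMeasurable
  have hint : Integrable (fun z : Circle => ((starRingEnd ℂ) m * (z : ℂ)).re) μ := by
    refine Integrable.mono' (integrable_const 1) hmeasre (Filter.Eventually.of_forall fun z => ?_)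
    calc ‖((starRingEnd ℂ) m * (z : ℂ)).re‖ ≤ ‖((starRingEnd ℂ) m * (z : ℂ))‖ :=
          Complex.abs_re_le_norm _
      _ = 1 := habs_all z
  have hcint : Integrable (fun z : Circle => (z : ℂ)) μ := by
    refine Integrable.mono' (integrable_const 1) measurable_circle_coe.aestronglyMeasurable
      (Filter.Eventually.of_forall fun z => ?_)
    exact (Circle.norm_coe z).le
  have hval : ∫ z : Circle, (1 - ((starRingEnd ℂ) m * (z : ℂ)).re) ∂μ = 0 := by
    rw [integral_sub (integrable_const 1) hint]
    have h1 : ∫ z : Circle, ((starRingEnd ℂ) m * (z : ℂ)).re ∂μ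
        = ((starRingEnd ℂ) m * m).re := by
      simp only [← RCLike.re_eq_complex_re]
      rw [integral_re (hcint.const_mul _), integral_const_mul]
    rw [h1, hconj_mul, integral_const]
    simp
  have hae : ∀ᵐ z : Circle ∂μ, (1 : ℝ) - ((starRingEnd ℂ) m * (z : ℂ)).re = 0 := by
    have hnn : 0 ≤ᵐ[μ] fun z : Circle => (1 : ℝ) - ((starRingEnd ℂ) m * (z : ℂ)).re := by
      refine Filter.Eventually.of_forall fun z => ?_
      have h2 := Complex.re_le_norm ((starRingEnd ℂ) m * (z : ℂ))
      rw [habs_all z] at h2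
      show (0 : ℝ) ≤ 1 - ((starRingEnd ℂ) m * (z : ℂ)).re
      linarith
    exact (integral_eq_zero_iff_of_nonneg_ae hnn ((integrable_const 1).sub hint)).mp hval
  have haec : ∀ᵐ z : Circle ∂μ, z = c := by
    filter_upwards [hae] with z hz
    have hre : ((starRingEnd ℂ) m * (z : ℂ)).re = 1 := by linarith
    have h1 : (starRingEnd ℂ) m * (z : ℂ) = 1 := eq_one_of_re_eq_one (habs_all z) hre
    have hne : (starRingEnd ℂ) m ≠ 0 := by
      intro h0
      rw [h0, zero_mul] at hconj_mul
      exact zero_ne_one hconj_mul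
    exact Subtype.ext (mul_left_cancel₀ hne (h1.trans hconj_mul.symm))
  refine ⟨c, ?_⟩
  calc μ = μ.map id := (Measure.map_id).symm
    _ = μ.map (fun _ => c) := Measure.map_congr haec
    _ = Measure.dirac c := by rw [Measure.map_const, measure_univ, one_smul]

end Statement6Aux

open Statement6Aux

theorem statement6
    {Ω : Type*} [MeasureSpace Ω] [IsProbabilityMeasure (ℙ : Measure Ω)]
    (ε : Fin 3 → Fin 3 → ℤ) (hε : ∀ i j, ε i j = 1 ∨ ε i j = -1)
    (ξ : Fin 3 → Ω → Circle) (hmeas : ∀ j, Measurable (ξ j))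
    (hindep : iIndepFun ξ ℙ)
    (hcf : ∀ j (n : ℤ), cfT (Measure.map (ξ j) ℙ) n ≠ 0)
    (hL : iIndepFun
      (fun i => fun ω => ξ 0 ω ^ ε i 0 * ξ 1 ω ^ ε i 1 * ξ 2 ω ^ ε i 2) ℙ) :
    ∀ j, ∃ c : Circle, Measure.map (ξ j) ℙ = Measure.dirac c := by
  classical
  set F : Fin 3 → ℤ → ℂ := fun j n => ∫ ω, ((ξ j ω : ℂ)) ^ n ∂ℙ with hFdef
  have hcfF : ∀ j n, cfT (Measure.map (ξ j) ℙ) n = F j n := by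
    intro j n
    simp only [cfT, hFdef]
    rw [integral_map (hmeas j).aemeasurable (measurable_charCircle n).aestronglyMeasurable]
  have hFne : ∀ j n, F j n ≠ 0 := fun j n => (hcfF j n) ▸ hcf j n
  have hF1le : ∀ j, ‖F j 1‖ ≤ 1 := by
    intro j
    calc ‖F j 1‖ ≤ ∫ ω, ‖((ξ j ω : ℂ)) ^ (1 : ℤ)‖ ∂ℙ := norm_integral_le_integral_norm _
      _ = 1 := by simp [Circle.norm_coe]
  have hFneg : ∀ j, ‖F j (-1)‖ = ‖F j 1‖ := by
    intro j
    have hpt : (fun ω => ((ξ j ω : ℂ)) ^ (-1 : ℤ))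
        = fun ω => (starRingEnd ℂ) (((ξ j ω : ℂ)) ^ (1 : ℤ)) := by
      funext ω
      rw [zpow_neg_one, zpow_one, ← Circle.coe_inv, Circle.coe_inv_eq_conj]
    have : F j (-1) = (starRingEnd ℂ) (F j 1) := by
      simp only [hFdef]
      rw [hpt, integral_conj]
    rw [this, RCLike.norm_conj]
  have hFpm : ∀ j (n : ℤ), (n = 1 ∨ n = -1) → ‖F j n‖ = ‖F j 1‖ := by
    rintro j n (rfl | rfl)
    · rfl
    · exact hFneg j
  -- choose signs
  obtain ⟨s, hs⟩ := exists_sign (fun i j => decide (ε i j = 1))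
  set σ : Fin 3 → ℤ := fun i => if s i then 1 else -1 with hσ
  have hεval : ∀ i j, (if (decide (ε i j = 1) : Bool) then (1 : ℤ) else -1) = ε i j := by
    intro i j; rcases hε i j with h | h <;> simp [h]
  set S : Fin 3 → ℤ := fun j => ε 0 j * σ 0 + ε 1 j * σ 1 + ε 2 j * σ 2 with hSdef
  have hS : ∀ j, S j = 1 ∨ S j = -1 := by
    intro j
    have h := hs j
    rw [hεval 0 j, hεval 1 j, hεval 2 j] at h
    have heq : S j = (if s 0 then (1:ℤ) else -1) * ε 0 j + (if s 1 then (1:ℤ) else -1) * ε 1 j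
        + (if s 2 then (1:ℤ) else -1) * ε 2 j := by
      simp only [hSdef, hσ]; ring
    rw [heq]
    exact h
  have hσpm : ∀ i, σ i = 1 ∨ σ i = -1 := by
    intro i; by_cases h : s i <;> simp [hσ, h]
  have hprodpm : ∀ i j, ε i j * σ i = 1 ∨ ε i j * σ i = -1 := by
    intro i j
    rcases hε i j with h | h <;> rcases hσpm i with h' | h' <;> rw [h, h'] <;> norm_num
  -- the linear statistics
  set L : Fin 3 → Ω → Circle :=
    fun i => fun ω => ξ 0 ω ^ ε i 0 * ξ 1 ω ^ ε i 1 * ξ 2 ω ^ ε i 2 with hLdef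
  have hLmeas : ∀ i, Measurable (L i) := by
    intro i
    exact (((continuous_zpow (ε i 0)).measurable.comp (hmeas 0)).mul
      ((continuous_zpow (ε i 1)).measurable.comp (hmeas 1))).mul
      ((continuous_zpow (ε i 2)).measurable.comp (hmeas 2))
  -- pointwise identities
  have hpt_single : ∀ i, (fun ω => ((L i ω : ℂ)) ^ σ i)
      = fun ω => ((ξ 0 ω : ℂ)) ^ (ε i 0 * σ i) * ((ξ 1 ω : ℂ)) ^ (ε i 1 * σ i)
          * ((ξ 2 ω : ℂ)) ^ (ε i 2 * σ i) := by
    intro i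
    funext ω
    have h := grp_single (ξ 0 ω) (ξ 1 ω) (ξ 2 ω) (ε i 0) (ε i 1) (ε i 2) (σ i)
    have h2 := congrArg (fun u : Circle => (u : ℂ)) h
    simpa only [hLdef, Circle.coe_mul, coe_zpow'] using h2
  have hpt_collect : (fun ω => ((L 0 ω : ℂ)) ^ σ 0 * ((L 1 ω : ℂ)) ^ σ 1 * ((L 2 ω : ℂ)) ^ σ 2)
      = fun ω => ((ξ 0 ω : ℂ)) ^ S 0 * ((ξ 1 ω : ℂ)) ^ S 1 * ((ξ 2 ω : ℂ)) ^ S 2 := by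
    funext ω
    have h := grp_collect (ξ 0 ω) (ξ 1 ω) (ξ 2 ω) (ε 0 0) (ε 0 1) (ε 0 2) (ε 1 0) (ε 1 1) (ε 1 2)
      (ε 2 0) (ε 2 1) (ε 2 2) (σ 0) (σ 1) (σ 2)
    have h2 := congrArg (fun u : Circle => (u : ℂ)) h
    simpa only [hLdef, Circle.coe_mul, coe_zpow'] using h2
  -- the key identity
  have key1 : ∫ ω, ((L 0 ω : ℂ)) ^ σ 0 * ((L 1 ω : ℂ)) ^ σ 1 * ((L 2 ω : ℂ)) ^ σ 2 ∂ℙ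
      = (∫ ω, ((L 0 ω : ℂ)) ^ σ 0 ∂ℙ) * (∫ ω, ((L 1 ω : ℂ)) ^ σ 1 ∂ℙ)
          * ∫ ω, ((L 2 ω : ℂ)) ^ σ 2 ∂ℙ :=
    integral_prod_three hLmeas hL σ
  have key2 : ∫ ω, ((L 0 ω : ℂ)) ^ σ 0 * ((L 1 ω : ℂ)) ^ σ 1 * ((L 2 ω : ℂ)) ^ σ 2 ∂ℙ
      = F 0 (S 0) * F 1 (S 1) * F 2 (S 2) := by
    rw [hpt_collect]
    exact integral_prod_three hmeas hindep S
  have key3 : ∀ i, ∫ ω, ((L i ω : ℂ)) ^ σ i ∂ℙ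
      = F 0 (ε i 0 * σ i) * F 1 (ε i 1 * σ i) * F 2 (ε i 2 * σ i) := by
    intro i
    rw [hpt_single i]
    exact integral_prod_three hmeas hindep (fun j => ε i j * σ i)
  have keyEq : F 0 (S 0) * F 1 (S 1) * F 2 (S 2)
      = (F 0 (ε 0 0 * σ 0) * F 1 (ε 0 1 * σ 0) * F 2 (ε 0 2 * σ 0))
        * (F 0 (ε 1 0 * σ 1) * F 1 (ε 1 1 * σ 1) * F 2 (ε 1 2 * σ 1))
        * (F 0 (ε 2 0 * σ 2) * F 1 (ε 2 1 * σ 2) * F 2 (ε 2 2 * σ 2)) := by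
    rw [← key3 0, ← key3 1, ← key3 2, ← key1, key2]
  -- take norms
  have hnormEq : ‖F 0 1‖ * ‖F 1 1‖ * ‖F 2 1‖
      = (‖F 0 1‖ * ‖F 1 1‖ * ‖F 2 1‖) ^ 3 := by
    have h := congrArg norm keyEq
    simp only [norm_mul] at h
    rw [hFpm 0 _ (hS 0), hFpm 1 _ (hS 1), hFpm 2 _ (hS 2),
      hFpm 0 _ (hprodpm 0 0), hFpm 1 _ (hprodpm 0 1), hFpm 2 _ (hprodpm 0 2),
      hFpm 0 _ (hprodpm 1 0), hFpm 1 _ (hprodpm 1 1), hFpm 2 _ (hprodpm 1 2),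
      hFpm 0 _ (hprodpm 2 0), hFpm 1 _ (hprodpm 2 1), hFpm 2 _ (hprodpm 2 2)] at h
    exact h.trans (by ring)
  have hrpos : ∀ j : Fin 3, 0 < ‖F j 1‖ := fun j => norm_pos_iff.mpr (hFne j 1)
  have hRpos : 0 < ‖F 0 1‖ * ‖F 1 1‖ * ‖F 2 1‖ :=
    mul_pos (mul_pos (hrpos 0) (hrpos 1)) (hrpos 2)
  have hfac : (‖F 0 1‖ * ‖F 1 1‖ * ‖F 2 1‖)
      * ((‖F 0 1‖ * ‖F 1 1‖ * ‖F 2 1‖ - 1) * (‖F 0 1‖ * ‖F 1 1‖ * ‖F 2 1‖ + 1)) = 0 := by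
    linear_combination -hnormEq
  have hR1 : ‖F 0 1‖ * ‖F 1 1‖ * ‖F 2 1‖ = 1 := by
    rcases mul_eq_zero.mp hfac with h | h
    · exact absurd h hRpos.ne'
    · rcases mul_eq_zero.mp h with h | h
      · linarith
      · linarith
  have factor_eq_one : ∀ a b : ℝ, a ≤ 1 → b ≤ 1 → 0 ≤ a → 0 ≤ b → a * b = 1 → a = 1 := by
    intro a b ha1 hb1 ha0 hb0 hab
    nlinarith
  have h12 : ‖F 1 1‖ * ‖F 2 1‖ ≤ 1 := mul_le_one₀ (hF1le 1) (hrpos 2).le (hF1le 2)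
  have h02 : ‖F 0 1‖ * ‖F 2 1‖ ≤ 1 := mul_le_one₀ (hF1le 0) (hrpos 2).le (hF1le 2)
  have h01 : ‖F 0 1‖ * ‖F 1 1‖ ≤ 1 := mul_le_one₀ (hF1le 0) (hrpos 1).le (hF1le 1)
  have hre0 : ‖F 0 1‖ = 1 := factor_eq_one _ _ (hF1le 0) h12 (hrpos 0).le
    (mul_nonneg (hrpos 1).le (hrpos 2).le) (by linear_combination hR1)
  have hre1 : ‖F 1 1‖ = 1 := factor_eq_one _ _ (hF1le 1) h02 (hrpos 1).le
    (mul_nonneg (hrpos 0).le (hrpos 2).le) (by linear_combination hR1)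
  have hre2 : ‖F 2 1‖ = 1 := factor_eq_one _ _ (hF1le 2) h01 (hrpos 2).le
    (mul_nonneg (hrpos 0).le (hrpos 1).le) (by linear_combination hR1)
  have hreach : ∀ j : Fin 3, ‖F j 1‖ = 1 := by
    intro j
    fin_cases j
    · exact hre0
    · exact hre1
    · exact hre2
  -- conclude
  intro j
  haveI : IsProbabilityMeasure (Measure.map (ξ j) ℙ) :=
    Measure.isProbabilityMeasure_map (hmeas j).aemeasurable
  apply dirac_of_norm_integral_eq_one
  have hint : ∫ z : Circle, (z : ℂ) ∂(Measure.map (ξ j) ℙ) = F j 1 := by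
    rw [← hcfF j 1]
    simp only [cfT, zpow_one]
  rw [hint]
  exact hreach j
end
end

section
/- Let X be a second countable locally compact Hausdorff abelian topological group with character group Y, and let α1, α2, β1, β2 be topological automorphisms of X. Let ξ1, ξ2, ξ3 be independent random variables with values in X and distributions μ1, μ2, μ3 whose characteristic functions do not vanish, and assume the linear statistics L1 = ξ1 + ξ2 + ξ3, L2 = α1ξ1 + α2ξ2 + ξ3 and L3 = β1ξ1 + β2ξ2 + ξ3 are independent. Put ν_j = μ_j ∗ μ̄_j and ν = ν1 ∗ ν2 ∗ ν3. Then ν is a Gaussian distribution: there exists a continuous nonnegative function φ on Y satisfying φ(u+v) + φ(u−v) = 2(φ(u) + φ(v)) for all u, v ∈ Y, such that ν̂(y) = exp(−φ(y)) for all y ∈ Y. -/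
/- Lemma 6 (first part): under the independence of the three linear statistics, the
convolution `ν = μ1 ∗ μ̄1 ∗ μ2 ∗ μ̄2 ∗ μ3 ∗ μ̄3` is a Gaussian distribution. -/

open MeasureTheory ProbabilityTheory

noncomputable section

/-- The character group `Y` of `X`: continuous homomorphisms from `X` into the circle
group `𝕋 = {z ∈ ℂ : |z| = 1}` (written multiplicatively), with the compact-open topology. -/
abbrev CharGroup (X : Type*) [AddMonoid X] [TopologicalSpace X] : Type _ :=
  ContinuousMonoidHom (Multiplicative X) Circle

/-- Characteristic function `μ̂(y) = ∫ (x, y) dμ(x)` of a measure on `X`. -/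
noncomputable def cfG {X : Type*} [AddCommGroup X] [TopologicalSpace X] [MeasurableSpace X]
    (μ : Measure X) (y : CharGroup X) : ℂ :=
  ∫ x, ((y (Multiplicative.ofAdd x) : Circle) : ℂ) ∂μ

/-- `ν = μ ∗ μ̄`, where `μ̄` is the image of `μ` under `x ↦ -x`. -/
noncomputable def nuOf {X : Type*} [AddCommGroup X] [MeasurableSpace X]
    (μ : Measure X) : Measure X :=
  μ.conv (Measure.map (fun x => -x) μ)

set_option linter.unusedSectionVars false
set_option linter.unusedVariables false

section Aux

open Complex

variable {X : Type*} [AddCommGroup X] [TopologicalSpace X] [IsTopologicalAddGroup X]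
    [LocallyCompactSpace X] [T2Space X] [SecondCountableTopology X]
    [MeasurableSpace X] [BorelSpace X]

/-- the kernel function -/
def chi (y : CharGroup X) (x : X) : ℂ := (y (Multiplicative.ofAdd x) : ℂ)

lemma chi_continuous (y : CharGroup X) : Continuous (chi y) := by
  exact continuous_subtype_val.comp (map_continuous y)

lemma norm_chi (y : CharGroup X) (x : X) : ‖chi y x‖ = 1 := by
  simpa [chi] using Circle.norm_coe _

lemma chi_add (y : CharGroup X) (x x' : X) : chi y (x + x') = chi y x * chi y x' := by
  show ((y (Multiplicative.ofAdd x * Multiplicative.ofAdd x') : Circle) : ℂ) = _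
  rw [map_mul, Circle.coe_mul]; rfl

lemma chi_mul (u v : CharGroup X) (x : X) : chi (u * v) x = chi u x * chi v x := rfl

lemma chi_inv (y : CharGroup X) (x : X) :
    chi y⁻¹ x = (starRingEnd ℂ) (chi y x) := by
  show ((y⁻¹ (Multiplicative.ofAdd x) : Circle) : ℂ) = _
  rw [show y⁻¹ (Multiplicative.ofAdd x) = (y (Multiplicative.ofAdd x))⁻¹ from rfl]
  exact Circle.coe_inv_eq_conj _

lemma chi_neg (y : CharGroup X) (x : X) : chi y (-x) = (starRingEnd ℂ) (chi y x) := by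
  show ((y (Multiplicative.ofAdd x)⁻¹ : Circle) : ℂ) = _
  rw [map_inv]
  exact Circle.coe_inv_eq_conj _

lemma chi_zero_char (x : X) : chi (1 : CharGroup X) x = 1 := rfl

lemma integrable_chi (y : CharGroup X) (μ : Measure X) [IsFiniteMeasure μ] :
    Integrable (chi y) μ := by
  refine ⟨(chi_continuous y).aestronglyMeasurable, ?_⟩
  apply MeasureTheory.HasFiniteIntegral.of_bounded (C := 1)
  filter_upwards with x
  rw [norm_chi]

lemma cfG_eq_integral_chi (μ : Measure X) (y : CharGroup X) : cfG μ y = ∫ x, chi y x ∂μ := rfl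

lemma cfG_map {Ω : Type*} [MeasurableSpace Ω] (P : Measure Ω) (ξ : Ω → X) (hξ : Measurable ξ)
    (y : CharGroup X) : cfG (Measure.map ξ P) y = ∫ ω, chi y (ξ ω) ∂P := by
  rw [cfG_eq_integral_chi]
  exact integral_map hξ.aemeasurable (chi_continuous y).aestronglyMeasurable

lemma norm_cfG_le_one (μ : Measure X) [IsProbabilityMeasure μ] (y : CharGroup X) :
    ‖cfG μ y‖ ≤ 1 := by
  rw [cfG_eq_integral_chi]
  calc ‖∫ x, chi y x ∂μ‖ ≤ ∫ x, ‖chi y x‖ ∂μ := norm_integral_le_integral_norm _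
    _ = 1 := by
      rw [show (fun x => ‖chi y x‖) = fun _ => (1:ℝ) from funext (norm_chi y)]
      simp

lemma cfG_one (μ : Measure X) [IsProbabilityMeasure μ] : cfG μ (1 : CharGroup X) = 1 := by
  rw [cfG_eq_integral_chi]
  simp [chi_zero_char]

lemma cfG_char_inv (μ : Measure X) (y : CharGroup X) :
    cfG μ y⁻¹ = (starRingEnd ℂ) (cfG μ y) := by
  rw [cfG_eq_integral_chi, cfG_eq_integral_chi, ← integral_conj]
  congr 1; ext x; exact chi_inv y x

lemma cfG_neg_map (μ : Measure X) [IsProbabilityMeasure μ] (y : CharGroup X) :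
    cfG (Measure.map (fun x => -x) μ) y = (starRingEnd ℂ) (cfG μ y) := by
  rw [cfG_eq_integral_chi, integral_map measurable_neg.aemeasurable
    (chi_continuous y).aestronglyMeasurable, cfG_eq_integral_chi, ← integral_conj]
  congr 1; ext x; exact chi_neg y x

lemma cfG_conv (μ ν : Measure X) [IsProbabilityMeasure μ] [IsProbabilityMeasure ν]
    (y : CharGroup X) : cfG (μ.conv ν) y = cfG μ y * cfG ν y := by
  rw [cfG_eq_integral_chi, Measure.conv,
    integral_map (by fun_prop) (chi_continuous y).aestronglyMeasurable]
  simp_rw [chi_add]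
  rw [integral_prod_mul (fun x => chi y x) (fun x => chi y x), cfG_eq_integral_chi,
    cfG_eq_integral_chi]

lemma cfG_nuOf (μ : Measure X) [IsProbabilityMeasure μ] (y : CharGroup X) :
    cfG (nuOf μ) y = (‖cfG μ y‖ : ℂ) ^ 2 := by
  have : IsProbabilityMeasure (Measure.map (fun x : X => -x) μ) :=
    Measure.isProbabilityMeasure_map measurable_neg.aemeasurable
  rw [nuOf, cfG_conv, cfG_neg_map, Complex.mul_conj, Complex.normSq_eq_norm_sq]
  push_cast
  ring

lemma indep_integral_mul {Ω β γ : Type*} [MeasurableSpace Ω] {P : Measure Ω} [IsFiniteMeasure P]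
    [MeasurableSpace β] [MeasurableSpace γ] {f : Ω → β} {g : Ω → γ}
    (hf : Measurable f) (hg : Measurable g) (h : IndepFun f g P) (F : β → ℂ) (G : γ → ℂ)
    (hFG : AEStronglyMeasurable (fun p : β × γ => F p.1 * G p.2) ((P.map f).prod (P.map g)))
    (hF : AEStronglyMeasurable F (P.map f)) (hG : AEStronglyMeasurable G (P.map g)) :
    ∫ ω, F (f ω) * G (g ω) ∂P = (∫ ω, F (f ω) ∂P) * ∫ ω, G (g ω) ∂P := by
  have hmap := (indepFun_iff_map_prod_eq_prod_map_map hf.aemeasurable hg.aemeasurable).mp h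
  rw [← integral_map hf.aemeasurable hF, ← integral_map hg.aemeasurable hG,
    ← integral_prod_mul F G, ← hmap,
    integral_map (hf.aemeasurable.prodMk hg.aemeasurable) (by rw [hmap]; exact hFG)]

lemma indep_triple_integral {Ω : Type*} [MeasureSpace Ω] [IsProbabilityMeasure (ℙ : Measure Ω)]
    (ξ1 ξ2 ξ3 : Ω → X) (hm1 : Measurable ξ1) (hm2 : Measurable ξ2) (hm3 : Measurable ξ3)
    (hindep : iIndepFun ![ξ1, ξ2, ξ3] ℙ)
    (c1 c2 c3 : CharGroup X) :
    ∫ ω, chi c1 (ξ1 ω) * chi c2 (ξ2 ω) * chi c3 (ξ3 ω) ∂ℙ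
      = (∫ ω, chi c1 (ξ1 ω) ∂ℙ) * (∫ ω, chi c2 (ξ2 ω) ∂ℙ) * ∫ ω, chi c3 (ξ3 ω) ∂ℙ := by
  have hmeas : ∀ i, Measurable (![ξ1, ξ2, ξ3] i) := by
    intro i; fin_cases i <;> simpa
  have h12 : IndepFun ξ1 ξ2 ℙ := by
    have := hindep.indepFun (i := 0) (j := 1) (by decide)
    simpa using this
  have hp3 : IndepFun (fun ω => (ξ1 ω, ξ2 ω)) ξ3 ℙ := by
    have := hindep.indepFun_prodMk hmeas 0 1 2 (by decide) (by decide)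
    simpa using this
  have key1 := indep_integral_mul (P := ℙ) ((hm1.prodMk hm2)) hm3 hp3
    (fun p : X × X => chi c1 p.1 * chi c2 p.2) (chi c3)
    ((((chi_continuous c1).comp (continuous_fst.comp continuous_fst)).mul
      ((chi_continuous c2).comp (continuous_snd.comp continuous_fst))).mul
      ((chi_continuous c3).comp continuous_snd)).aestronglyMeasurable
    (((chi_continuous c1).comp continuous_fst).mul
      ((chi_continuous c2).comp continuous_snd)).aestronglyMeasurable
    (chi_continuous c3).aestronglyMeasurable
  have key2 := indep_integral_mul (P := ℙ) hm1 hm2 h12 (chi c1) (chi c2)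
    (((chi_continuous c1).comp continuous_fst).mul
      ((chi_continuous c2).comp continuous_snd)).aestronglyMeasurable
    (chi_continuous c1).aestronglyMeasurable (chi_continuous c2).aestronglyMeasurable
  rw [key1, key2]

lemma cfG_continuous (μ : Measure X) [IsProbabilityMeasure μ] : Continuous (cfG μ) := by
  rw [continuous_iff_continuousAt]
  intro y0
  rw [ContinuousAt, Metric.tendsto_nhds]
  intro ε hε
  -- tightness
  obtain ⟨K, -, hKc, hK⟩ := MeasurableSet.univ.exists_isCompact_lt_add
    (μ := μ) (measure_ne_top μ _) (ε := ENNReal.ofReal (ε/8)) (ENNReal.ofReal_pos.mpr (by positivity)).ne'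
  have hcompl : μ Kᶜ < ENNReal.ofReal (ε/8) := by
    rw [measure_compl hKc.measurableSet (measure_ne_top μ K)]
    exact ENNReal.sub_lt_of_lt_add (measure_mono (Set.subset_univ K)) (by rwa [add_comm] at hK)
  have hcomplR : (μ Kᶜ).toReal < ε/8 := ENNReal.toReal_lt_of_lt_ofReal hcompl
  -- uniform convergence on K
  have hK' : IsCompact {m : Multiplicative X | m.toAdd ∈ K} := hKc
  have hcont : Filter.Tendsto
      (fun y : CharGroup X => (y.toContinuousMap : C(Multiplicative X, Circle)))
      (nhds y0) (nhds y0.toContinuousMap) :=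
    ((ContinuousMonoidHom.isInducing_toContinuousMap _ _).continuous).tendsto y0
  have hunif := (ContinuousMap.tendsto_iff_forall_isCompact_tendstoUniformlyOn.mp hcont)
    _ hK'
  replace hunif := Metric.tendstoUniformlyOn_iff.mp hunif
  filter_upwards [hunif (ε/8) (by positivity)] with y hy
  -- pointwise bound
  have hbound : ∀ x : X, ‖chi y x - chi y0 x‖
      ≤ ε/8 + Set.indicator Kᶜ (fun _ => (2:ℝ)) x := by
    intro x
    by_cases hx : x ∈ K
    · have := hy (Multiplicative.ofAdd x) hx
      erw [Subtype.dist_eq, dist_comm, dist_eq_norm] at this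
      simp only [Set.indicator_of_notMem (by simpa using hx : x ∉ Kᶜ)]
      exact le_of_lt (by simpa [chi] using this)
    · rw [Set.indicator_of_mem (by simpa using hx) (fun _ => (2:ℝ))]
      calc ‖chi y x - chi y0 x‖ ≤ ‖chi y x‖ + ‖chi y0 x‖ := norm_sub_le _ _
        _ = 2 := by rw [norm_chi, norm_chi]; norm_num
        _ ≤ ε/8 + 2 := by linarith
  rw [dist_eq_norm, cfG_eq_integral_chi, cfG_eq_integral_chi,
    ← integral_sub (integrable_chi y μ) (integrable_chi y0 μ)]
  have hint2 : Integrable (fun x => ε/8 + Set.indicator Kᶜ (fun _ => (2:ℝ)) x) μ :=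
    (integrable_const _).add ((integrable_const (2:ℝ)).indicator hKc.measurableSet.compl)
  calc ‖∫ x, (chi y x - chi y0 x) ∂μ‖ ≤ ∫ x, ‖chi y x - chi y0 x‖ ∂μ :=
        norm_integral_le_integral_norm _
    _ ≤ ∫ x, (ε/8 + Set.indicator Kᶜ (fun _ => (2:ℝ)) x) ∂μ := by
        refine integral_mono ((integrable_chi y μ).sub (integrable_chi y0 μ)).norm hint2 hbound
    _ = ε/8 + 2 * (μ Kᶜ).toReal := by
        rw [integral_add (integrable_const _)
          ((integrable_const (2:ℝ)).indicator hKc.measurableSet.compl),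
          integral_const, integral_indicator_const _ hKc.measurableSet.compl]
        simp [measure_univ, mul_comm, measureReal_def]
    _ < ε := by linarith

/-- The continuous monoid hom on `Multiplicative X` induced by a continuous additive
automorphism. -/
def mulHomOfAddEquiv (α : X ≃+ X) (hα : Continuous α) :
    ContinuousMonoidHom (Multiplicative X) (Multiplicative X) where
  toFun := fun m => Multiplicative.ofAdd (α m.toAdd)
  map_one' := by
    show Multiplicative.ofAdd (α 0) = _
    rw [map_zero]; rfl
  map_mul' := fun m n => by
    show Multiplicative.ofAdd (α (m.toAdd + n.toAdd)) = _
    rw [map_add]; rfl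
  continuous_toFun := hα

/-- The adjoint action of a topological automorphism on the character group. -/
def adjChar (α : X ≃+ X) (hα : Continuous α) (y : CharGroup X) : CharGroup X :=
  y.comp (mulHomOfAddEquiv α hα)

lemma chi_adjChar (α : X ≃+ X) (hα : Continuous α) (y : CharGroup X) (x : X) :
    chi (adjChar α hα y) x = chi y (α x) := rfl

lemma adjChar_mul (α : X ≃+ X) (hα : Continuous α) (u v : CharGroup X) :
    adjChar α hα (u * v) = adjChar α hα u * adjChar α hα v := rfl

lemma adjChar_surjective (α : X ≃+ X) (hα : Continuous α) (hα' : Continuous α.symm) :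
    Function.Surjective (adjChar α hα) := by
  intro y
  refine ⟨adjChar α.symm hα' y, ?_⟩
  ext m
  show ((y (Multiplicative.ofAdd (α.symm (α m.toAdd))) : Circle) : ℂ) = ((y m : Circle) : ℂ)
  rw [AddEquiv.symm_apply_apply]
  rfl


end Aux

open Function

/-- Pure finite-difference algebra: from the Skitovich–Darmois type functional equation,
evenness and vanishing at 0, derive the parallelogram law for `Φ`. -/
theorem alg_lemma {A : Type*} [AddCommGroup A] (ψ2 ψ3 Φ Ψ : A → ℝ) (ψ1 : A → ℝ)
    (a b : A → A) (haM : ∀ x y, a (x + y) = a x + a y) (hbM : ∀ x y, b (x + y) = b x + b y)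
    (ha : Surjective a) (hb : Surjective b)
    (hE : ∀ u v, ψ1 (u + a v) + ψ2 (u + b v) + ψ3 (u + v) = Φ u + Ψ v)
    (hev : ∀ y, Φ (-y) = Φ y) (h0 : Φ 0 = 0) :
    ∀ u v, Φ (u + v) + Φ (u - v) = 2 * (Φ u + Φ v) := by
  -- Step 1
  have E1 : ∀ u v s, ψ2 (u + b v + (b s - a s)) + ψ3 (u + v + (s - a s))
      - ψ2 (u + b v) - ψ3 (u + v) = Φ (u - a s) - Φ u + Ψ (v + s) - Ψ v := by
    intro u v s
    have h1 := hE (u - a s) (v + s)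
    rw [haM, hbM, show u - a s + (a v + a s) = u + a v by abel,
      show u - a s + (b v + b s) = u + b v + (b s - a s) by abel,
      show u - a s + (v + s) = u + v + (s - a s) by abel] at h1
    have h2 := hE u v
    linarith
  -- Step 2
  have E2 : ∀ u v s t, ψ3 (u + v + (s - a s) + (t - b t)) - ψ3 (u + v + (t - b t))
      - ψ3 (u + v + (s - a s)) + ψ3 (u + v)
      = Φ (u - a s - b t) - Φ (u - b t) - Φ (u - a s) + Φ u
        + Ψ (v + s + t) - Ψ (v + t) - Ψ (v + s) + Ψ v := by
    intro u v s t
    have h1 := E1 (u - b t) (v + t) s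
    rw [hbM, show u - b t + (b v + b t) + (b s - a s) = u + b v + (b s - a s) by abel,
      show u - b t + (b v + b t) = u + b v by abel,
      show u - b t + (v + t) + (s - a s) = u + v + (s - a s) + (t - b t) by abel,
      show u - b t + (v + t) = u + v + (t - b t) by abel,
      show v + t + s = v + s + t by abel,
      show u - b t - a s = u - a s - b t by abel] at h1
    have h2 := E1 u v s
    linarith
  -- Step 3 : third difference of Φ equals third difference of -Ψ
  have E3 : ∀ u v r s t,
      Φ (u - r - a s - b t) - Φ (u - r - b t) - Φ (u - r - a s) + Φ (u - r)
      - Φ (u - a s - b t) + Φ (u - b t) + Φ (u - a s) - Φ u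
      = - (Ψ (v + r + s + t) - Ψ (v + r + t) - Ψ (v + r + s) + Ψ (v + r)
          - Ψ (v + s + t) + Ψ (v + t) + Ψ (v + s) - Ψ v) := by
    intro u v r s t
    have h1 := E2 (u - r) (v + r) s t
    rw [show u - r + (v + r) = u + v by abel,
      show v + r + s + t = v + r + (s + t) by abel,
      show v + r + t = v + (r + t) by abel,
      show v + r + s = v + (r + s) by abel] at h1
    have h2 := E2 u v s t
    rw [show v + s + t = v + (s + t) by abel] at h2
    rw [show v + r + s + t = v + r + (s + t) by abel,
      show v + r + t = v + (r + t) by abel,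
      show v + r + s = v + (r + s) by abel,
      show v + s + t = v + (s + t) by abel]
    linarith
  -- Third differences of Φ are independent of the base point.
  have D3 : ∀ u p q w,
      Φ (u + p + q + w) - Φ (u + p + q) - Φ (u + p + w) - Φ (u + q + w)
      + Φ (u + p) + Φ (u + q) + Φ (u + w) - Φ u
      = Φ (p + q + w) - Φ (p + q) - Φ (p + w) - Φ (q + w)
      + Φ p + Φ q + Φ w - Φ 0 := by
    intro u p q w
    obtain ⟨s, hs⟩ := ha (-p)
    obtain ⟨t, ht⟩ := hb (-q)
    have h1 := E3 u 0 (-w) s t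
    have h2 := E3 0 0 (-w) s t
    rw [hs, ht] at h1 h2
    rw [show u - -w - -p - -q = u + p + q + w by abel,
      show u - -w - -q = u + q + w by abel,
      show u - -w - -p = u + p + w by abel,
      show u - -w = u + w by abel,
      show u - -p - -q = u + p + q by abel,
      show u - -q = u + q by abel,
      show u - -p = u + p by abel] at h1
    rw [show (0:A) - -w - -p - -q = p + q + w by abel,
      show (0:A) - -w - -q = q + w by abel,
      show (0:A) - -w - -p = p + w by abel,
      show (0:A) - -w = w by abel,
      show (0:A) - -p - -q = p + q by abel,
      show (0:A) - -q = q by abel,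
      show (0:A) - -p = p by abel] at h2
    linarith
  -- Evenness kills the constant: third differences vanish.
  have D30 : ∀ u p q w,
      Φ (u + p + q + w) - Φ (u + p + q) - Φ (u + p + w) - Φ (u + q + w)
      + Φ (u + p) + Φ (u + q) + Φ (u + w) - Φ u = 0 := by
    have hC : ∀ p q w, Φ (p + q + w) - Φ (p + q) - Φ (p + w) - Φ (q + w)
        + Φ p + Φ q + Φ w - Φ 0 = 0 := by
      intro p q w
      have h1 := D3 (-(p + q + w)) p q w
      rw [show -(p + q + w) + p + q + w = -(0:A) by abel,
        show -(p + q + w) + p + q = -w by abel,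
        show -(p + q + w) + p + w = -q by abel,
        show -(p + q + w) + q + w = -p by abel,
        show -(p + q + w) + p = -(q + w) by abel,
        show -(p + q + w) + q = -(p + w) by abel,
        show -(p + q + w) + w = -(p + q) by abel,
        show -(p + q + w) = -(p + q + w) from rfl] at h1
      rw [hev, hev, hev, hev, hev, hev, hev, hev] at h1
      linarith
    intro u p q w
    have := D3 u p q w
    have := hC p q w
    linarith
  intro u v
  have h1 := D30 0 u v (-v)
  rw [show (0:A) + u + v + -v = u by abel, show (0:A) + u + v = u + v by abel,
    show (0:A) + u + -v = u - v by abel, show (0:A) + v + -v = 0 by abel,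
    show (0:A) + u = u by abel, show (0:A) + v = v by abel,
    show (0:A) + -v = -v by abel] at h1
  rw [hev] at h1
  linarith
section MulAlg

open Function

/-- Multiplicative version of the finite-difference lemma. -/
theorem alg_lemma_mul {G : Type*} [CommGroup G] (ψ1 ψ2 ψ3 Φ Ψ : G → ℝ) (a b : G → G)
    (haM : ∀ x y, a (x * y) = a x * a y) (hbM : ∀ x y, b (x * y) = b x * b y)
    (ha : Surjective a) (hb : Surjective b)
    (hE : ∀ u v, ψ1 (u * a v) + ψ2 (u * b v) + ψ3 (u * v) = Φ u + Ψ v)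
    (hev : ∀ y, Φ y⁻¹ = Φ y) (h0 : Φ 1 = 0) :
    ∀ u v, Φ (u * v) + Φ (u / v) = 2 * (Φ u + Φ v) := by
  intro u v
  exact alg_lemma (A := Additive G)
    (fun p => ψ2 p.toMul) (fun p => ψ3 p.toMul) (fun p => Φ p.toMul) (fun p => Ψ p.toMul)
    (fun p => ψ1 p.toMul)
    (fun p => Additive.ofMul (a p.toMul)) (fun p => Additive.ofMul (b p.toMul))
    (fun x y => congrArg Additive.ofMul (haM x.toMul y.toMul))
    (fun x y => congrArg Additive.ofMul (hbM x.toMul y.toMul))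
    (fun p => by obtain ⟨s, hs⟩ := ha p.toMul; exact ⟨Additive.ofMul s, congrArg Additive.ofMul hs⟩)
    (fun p => by obtain ⟨s, hs⟩ := hb p.toMul; exact ⟨Additive.ofMul s, congrArg Additive.ofMul hs⟩)
    (fun x y => hE x.toMul y.toMul) (fun p => hev p.toMul) h0
    (Additive.ofMul u) (Additive.ofMul v)

end MulAlg

theorem statement7
    {X : Type*} [AddCommGroup X] [TopologicalSpace X] [IsTopologicalAddGroup X]
    [LocallyCompactSpace X] [T2Space X] [SecondCountableTopology X]
    [MeasurableSpace X] [BorelSpace X]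
    {Ω : Type*} [MeasureSpace Ω] [IsProbabilityMeasure (ℙ : Measure Ω)]
    (α1 α2 β1 β2 : X ≃+ X)
    (hα1 : Continuous α1) (hα1' : Continuous α1.symm)
    (hα2 : Continuous α2) (hα2' : Continuous α2.symm)
    (hβ1 : Continuous β1) (hβ1' : Continuous β1.symm)
    (hβ2 : Continuous β2) (hβ2' : Continuous β2.symm)
    (ξ1 ξ2 ξ3 : Ω → X) (hm1 : Measurable ξ1) (hm2 : Measurable ξ2) (hm3 : Measurable ξ3)
    (hindep : iIndepFun ![ξ1, ξ2, ξ3] ℙ)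
    (hcf1 : ∀ y : CharGroup X, cfG (Measure.map ξ1 ℙ) y ≠ 0)
    (hcf2 : ∀ y : CharGroup X, cfG (Measure.map ξ2 ℙ) y ≠ 0)
    (hcf3 : ∀ y : CharGroup X, cfG (Measure.map ξ3 ℙ) y ≠ 0)
    (hL : iIndepFun
      ![fun ω => ξ1 ω + ξ2 ω + ξ3 ω,
        fun ω => α1 (ξ1 ω) + α2 (ξ2 ω) + ξ3 ω,
        fun ω => β1 (ξ1 ω) + β2 (ξ2 ω) + ξ3 ω] ℙ) :
    ∃ φ : CharGroup X → ℝ,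
      Continuous φ ∧ (∀ y, 0 ≤ φ y) ∧
      (∀ u v : CharGroup X, φ (u * v) + φ (u * v⁻¹) = 2 * (φ u + φ v)) ∧
      ∀ y : CharGroup X,
        cfG ((nuOf (Measure.map ξ1 ℙ)).conv
          ((nuOf (Measure.map ξ2 ℙ)).conv (nuOf (Measure.map ξ3 ℙ)))) y =
        Complex.exp (-(φ y : ℂ)) := by
  haveI i1 : IsProbabilityMeasure (Measure.map ξ1 ℙ) := Measure.isProbabilityMeasure_map hm1.aemeasurable
  haveI i2 : IsProbabilityMeasure (Measure.map ξ2 ℙ) := Measure.isProbabilityMeasure_map hm2.aemeasurable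
  haveI i3 : IsProbabilityMeasure (Measure.map ξ3 ℙ) := Measure.isProbabilityMeasure_map hm3.aemeasurable
  set a : CharGroup X → CharGroup X := adjChar α1 hα1 with ha_def
  set bb : CharGroup X → CharGroup X := adjChar α2 hα2 with hb_def
  have hmL1 : Measurable (fun ω => ξ1 ω + ξ2 ω + ξ3 ω) := (hm1.add hm2).add hm3
  have hmL2 : Measurable (fun ω => α1 (ξ1 ω) + α2 (ξ2 ω) + ξ3 ω) :=
    ((hα1.measurable.comp hm1).add (hα2.measurable.comp hm2)).add hm3
  have hL12 : IndepFun (fun ω => ξ1 ω + ξ2 ω + ξ3 ω)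
      (fun ω => α1 (ξ1 ω) + α2 (ξ2 ω) + ξ3 ω) ℙ := by
    have := hL.indepFun (i := 0) (j := 1) (by decide)
    simpa using this
  -- the master functional equation
  have master : ∀ u v : CharGroup X,
      cfG (Measure.map ξ1 ℙ) (u * a v) * cfG (Measure.map ξ2 ℙ) (u * bb v) *
        cfG (Measure.map ξ3 ℙ) (u * v)
      = (cfG (Measure.map ξ1 ℙ) u * cfG (Measure.map ξ2 ℙ) u * cfG (Measure.map ξ3 ℙ) u) *
        (cfG (Measure.map ξ1 ℙ) (a v) * cfG (Measure.map ξ2 ℙ) (bb v) *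
          cfG (Measure.map ξ3 ℙ) v) := by
    intro u v
    have key := indep_integral_mul hmL1 hmL2 hL12 (chi u) (chi v)
      (((chi_continuous u).comp continuous_fst).mul
        ((chi_continuous v).comp continuous_snd)).aestronglyMeasurable
      (chi_continuous u).aestronglyMeasurable (chi_continuous v).aestronglyMeasurable
    have e1 : (∫ ω, chi u (ξ1 ω + ξ2 ω + ξ3 ω) * chi v (α1 (ξ1 ω) + α2 (ξ2 ω) + ξ3 ω) ∂ℙ)
        = ∫ ω, chi (u * a v) (ξ1 ω) * chi (u * bb v) (ξ2 ω) * chi (u * v) (ξ3 ω) ∂ℙ := by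
      refine integral_congr_ae (Filter.Eventually.of_forall fun ω => ?_)
      beta_reduce
      rw [chi_add, chi_add, chi_add, chi_add, ha_def, hb_def,
        ← chi_adjChar α1 hα1 v (ξ1 ω), ← chi_adjChar α2 hα2 v (ξ2 ω),
        chi_mul, chi_mul, chi_mul]
      ring
    have e2 : (∫ ω, chi u (ξ1 ω + ξ2 ω + ξ3 ω) ∂ℙ)
        = ∫ ω, chi u (ξ1 ω) * chi u (ξ2 ω) * chi u (ξ3 ω) ∂ℙ := by
      refine integral_congr_ae (Filter.Eventually.of_forall fun ω => ?_)
      beta_reduce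
      rw [chi_add, chi_add]
    have e3 : (∫ ω, chi v (α1 (ξ1 ω) + α2 (ξ2 ω) + ξ3 ω) ∂ℙ)
        = ∫ ω, chi (a v) (ξ1 ω) * chi (bb v) (ξ2 ω) * chi v (ξ3 ω) ∂ℙ := by
      refine integral_congr_ae (Filter.Eventually.of_forall fun ω => ?_)
      beta_reduce
      rw [chi_add, chi_add, ha_def, hb_def, ← chi_adjChar α1 hα1 v (ξ1 ω),
        ← chi_adjChar α2 hα2 v (ξ2 ω)]
    rw [e1, e2, e3] at key
    rw [indep_triple_integral ξ1 ξ2 ξ3 hm1 hm2 hm3 hindep,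
      indep_triple_integral ξ1 ξ2 ξ3 hm1 hm2 hm3 hindep,
      indep_triple_integral ξ1 ξ2 ξ3 hm1 hm2 hm3 hindep] at key
    rw [← cfG_map ℙ ξ1 hm1, ← cfG_map ℙ ξ2 hm2, ← cfG_map ℙ ξ3 hm3,
      ← cfG_map ℙ ξ1 hm1, ← cfG_map ℙ ξ2 hm2, ← cfG_map ℙ ξ3 hm3,
      ← cfG_map ℙ ξ1 hm1, ← cfG_map ℙ ξ2 hm2, ← cfG_map ℙ ξ3 hm3] at key
    exact key
  -- moduli of characteristic functions
  set g1 : CharGroup X → ℝ := fun y => ‖cfG (Measure.map ξ1 ℙ) y‖ with hg1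
  set g2 : CharGroup X → ℝ := fun y => ‖cfG (Measure.map ξ2 ℙ) y‖ with hg2
  set g3 : CharGroup X → ℝ := fun y => ‖cfG (Measure.map ξ3 ℙ) y‖ with hg3
  have hg1pos : ∀ y, 0 < g1 y := fun y => norm_pos_iff.mpr (hcf1 y)
  have hg2pos : ∀ y, 0 < g2 y := fun y => norm_pos_iff.mpr (hcf2 y)
  have hg3pos : ∀ y, 0 < g3 y := fun y => norm_pos_iff.mpr (hcf3 y)
  have hg1le : ∀ y, g1 y ≤ 1 := fun y => by
    rw [hg1]; simpa using norm_cfG_le_one (Measure.map ξ1 ℙ) y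
  have hg2le : ∀ y, g2 y ≤ 1 := fun y => by
    rw [hg2]; simpa using norm_cfG_le_one (Measure.map ξ2 ℙ) y
  have hg3le : ∀ y, g3 y ≤ 1 := fun y => by
    rw [hg3]; simpa using norm_cfG_le_one (Measure.map ξ3 ℙ) y
  set ψ1 : CharGroup X → ℝ := fun y => -(2 * Real.log (g1 y)) with hψ1
  set ψ2 : CharGroup X → ℝ := fun y => -(2 * Real.log (g2 y)) with hψ2
  set ψ3 : CharGroup X → ℝ := fun y => -(2 * Real.log (g3 y)) with hψ3
  set Φ : CharGroup X → ℝ := fun y => ψ1 y + ψ2 y + ψ3 y with hΦ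
  have habs : ∀ u v, g1 (u * a v) * g2 (u * bb v) * g3 (u * v)
      = (g1 u * g2 u * g3 u) * (g1 (a v) * g2 (bb v) * g3 v) := by
    intro u v
    have := congrArg norm (master u v)
    simp only [norm_mul] at this
    simp only [hg1, hg2, hg3]
    exact this
  have hE : ∀ u v, ψ1 (u * a v) + ψ2 (u * bb v) + ψ3 (u * v)
      = Φ u + (ψ1 (a v) + ψ2 (bb v) + ψ3 v) := by
    intro u v
    have h := congrArg Real.log (habs u v)
    rw [Real.log_mul (mul_ne_zero (hg1pos _).ne' (hg2pos _).ne') (hg3pos _).ne',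
      Real.log_mul (hg1pos _).ne' (hg2pos _).ne',
      Real.log_mul (mul_ne_zero (mul_ne_zero (hg1pos _).ne' (hg2pos _).ne') (hg3pos _).ne')
        (mul_ne_zero (mul_ne_zero (hg1pos _).ne' (hg2pos _).ne') (hg3pos _).ne'),
      Real.log_mul (mul_ne_zero (hg1pos _).ne' (hg2pos _).ne') (hg3pos _).ne',
      Real.log_mul (hg1pos _).ne' (hg2pos _).ne',
      Real.log_mul (mul_ne_zero (hg1pos _).ne' (hg2pos _).ne') (hg3pos _).ne',
      Real.log_mul (hg1pos _).ne' (hg2pos _).ne'] at h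
    simp only [hψ1, hψ2, hψ3, hΦ]
    linarith
  have hg1inv : ∀ y : CharGroup X, g1 y⁻¹ = g1 y := fun y => by
    simp only [hg1]; rw [cfG_char_inv, Complex.norm_conj]
  have hg2inv : ∀ y : CharGroup X, g2 y⁻¹ = g2 y := fun y => by
    simp only [hg2]; rw [cfG_char_inv, Complex.norm_conj]
  have hg3inv : ∀ y : CharGroup X, g3 y⁻¹ = g3 y := fun y => by
    simp only [hg3]; rw [cfG_char_inv, Complex.norm_conj]
  have hev : ∀ y : CharGroup X, Φ y⁻¹ = Φ y := fun y => by
    simp only [hΦ, hψ1, hψ2, hψ3, hg1inv, hg2inv, hg3inv]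
  have h0 : Φ 1 = 0 := by
    have e1 : g1 1 = 1 := by simp only [hg1]; rw [cfG_one]; simp
    have e2 : g2 1 = 1 := by simp only [hg2]; rw [cfG_one]; simp
    have e3 : g3 1 = 1 := by simp only [hg3]; rw [cfG_one]; simp
    simp only [hΦ, hψ1, hψ2, hψ3, e1, e2, e3, Real.log_one]
    ring
  have hpar := alg_lemma_mul ψ1 ψ2 ψ3 Φ (fun v => ψ1 (a v) + ψ2 (bb v) + ψ3 v) a bb
    (fun x y => by rw [ha_def]; exact adjChar_mul α1 hα1 x y)
    (fun x y => by rw [hb_def]; exact adjChar_mul α2 hα2 x y)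
    (by rw [ha_def]; exact adjChar_surjective α1 hα1 hα1')
    (by rw [hb_def]; exact adjChar_surjective α2 hα2 hα2')
    hE hev h0
  simp only [div_eq_mul_inv] at hpar
  -- continuity
  have hc1 : Continuous g1 := by rw [hg1]; exact continuous_norm.comp (cfG_continuous _)
  have hc2 : Continuous g2 := by rw [hg2]; exact continuous_norm.comp (cfG_continuous _)
  have hc3 : Continuous g3 := by rw [hg3]; exact continuous_norm.comp (cfG_continuous _)
  have hcΦ : Continuous Φ := by
    rw [hΦ, hψ1, hψ2, hψ3]
    exact (((continuous_const.mul (hc1.log fun y => (hg1pos y).ne')).neg).add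
      ((continuous_const.mul (hc2.log fun y => (hg2pos y).ne')).neg)).add
      ((continuous_const.mul (hc3.log fun y => (hg3pos y).ne')).neg)
  have hnn : ∀ y, 0 ≤ Φ y := by
    intro y
    have l1 := Real.log_nonpos (hg1pos y).le (hg1le y)
    have l2 := Real.log_nonpos (hg2pos y).le (hg2le y)
    have l3 := Real.log_nonpos (hg3pos y).le (hg3le y)
    simp only [hΦ, hψ1, hψ2, hψ3]
    linarith
  refine ⟨Φ, hcΦ, hnn, hpar, ?_⟩
  intro y
  haveI n1 : IsProbabilityMeasure (nuOf (Measure.map ξ1 ℙ)) := by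
    haveI : IsProbabilityMeasure (Measure.map (fun x : X => -x) (Measure.map ξ1 ℙ)) :=
      Measure.isProbabilityMeasure_map measurable_neg.aemeasurable
    unfold nuOf; infer_instance
  haveI n2 : IsProbabilityMeasure (nuOf (Measure.map ξ2 ℙ)) := by
    haveI : IsProbabilityMeasure (Measure.map (fun x : X => -x) (Measure.map ξ2 ℙ)) :=
      Measure.isProbabilityMeasure_map measurable_neg.aemeasurable
    unfold nuOf; infer_instance
  haveI n3 : IsProbabilityMeasure (nuOf (Measure.map ξ3 ℙ)) := by
    haveI : IsProbabilityMeasure (Measure.map (fun x : X => -x) (Measure.map ξ3 ℙ)) :=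
      Measure.isProbabilityMeasure_map measurable_neg.aemeasurable
    unfold nuOf; infer_instance
  rw [cfG_conv, cfG_conv, cfG_nuOf, cfG_nuOf, cfG_nuOf]
  have hexp : Complex.exp (-(Φ y : ℂ))
      = ((g1 y * g1 y * (g2 y * g2 y * (g3 y * g3 y)) : ℝ) : ℂ) := by
    rw [show -(Φ y : ℂ) = ((-(Φ y) : ℝ) : ℂ) by push_cast; ring, ← Complex.ofReal_exp]
    congr 1
    have hsplit : -(Φ y) = (Real.log (g1 y) + Real.log (g1 y))
        + ((Real.log (g2 y) + Real.log (g2 y)) + (Real.log (g3 y) + Real.log (g3 y))) := by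
      simp only [hΦ, hψ1, hψ2, hψ3]; ring
    rw [hsplit, Real.exp_add, Real.exp_add, Real.exp_add, Real.exp_add, Real.exp_add,
      Real.exp_log (hg1pos y), Real.exp_log (hg2pos y), Real.exp_log (hg3pos y)]
  rw [hexp]
  simp only [hg1, hg2, hg3]
  push_cast
  ring
end
end

section
/- Let Y = ℝ × ℤ and let f : Y → ℝ be a continuous function (equivalently, s ↦ f(s,n) is continuous for each n ∈ ℤ) satisfying Δ²_k Δ_h f(y) = 0 for all k ∈ ℝ × {0} and all h, y ∈ Y, and satisfying f(−y) = f(y) for all y ∈ Y. Then there exist σ ∈ ℝ and functions κ, λ : ℤ → ℝ with κ(−n) = −κ(n) and λ(−n) = λ(n) for all n ∈ ℤ, such that f(s,n) = σ s² + κ(n) s + λ(n) for all s ∈ ℝ and n ∈ ℤ. -/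
/- Lemma 8: a continuous even function on `Y = ℝ × ℤ` whose third finite differences
`Δ²_k Δ_h f` vanish for `k ∈ ℝ × {0}` is of the form
`f(s, n) = σ s² + κ(n) s + λ(n)` with `κ` odd and `λ` even. -/

/-- Finite difference operator `Δ_h f(y) = f(y + h) - f(y)`. -/
def fdiff {G : Type*} [Add G] (h : G) (f : G → ℝ) : G → ℝ :=
  fun y => f (y + h) - f y

/-- A continuous additive function `ℝ → ℝ` is linear. -/
lemma lin_of_additive (q : ℝ → ℝ) (hq : Continuous q)
    (hadd : ∀ a b, q (a + b) = q a + q b) : ∀ x, q x = q 1 * x := by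
  intro x
  let Q : ℝ →+ ℝ := AddMonoidHom.mk' q hadd
  have h1 : (Q.toRealLinearMap hq) x = x • (Q.toRealLinearMap hq) 1 := by
    rw [← (Q.toRealLinearMap hq).map_smul]; simp
  have h2 : q x = x * q 1 := h1
  rw [h2, mul_comm]

/-- A continuous function with vanishing second differences is affine. -/
lemma affine_of_fd2 (φ : ℝ → ℝ) (hc : Continuous φ)
    (h : ∀ t s, φ (s + t + t) - 2 * φ (s + t) + φ s = 0) :
    ∀ s, φ s = (φ 1 - φ 0) * s + φ 0 := by
  have hmid : ∀ a b, φ a + φ b = 2 * φ ((a + b) / 2) := by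
    intro a b
    have := h ((a - b) / 2) b
    have e1 : b + (a - b) / 2 + (a - b) / 2 = a := by ring
    have e2 : b + (a - b) / 2 = (a + b) / 2 := by ring
    rw [e1, e2] at this; linarith
  have hadd : ∀ a b, (φ (a + b) - φ 0) = (φ a - φ 0) + (φ b - φ 0) := by
    intro a b
    have h1 := hmid a b
    have h2 := hmid (a + b) 0
    rw [add_zero] at h2
    linarith
  have := lin_of_additive (fun s => φ s - φ 0) (by fun_prop) hadd
  intro s
  have := this s
  linarith [this]

/-- A continuous function with vanishing third differences is quadratic. -/
lemma quad_of_fd3 (g : ℝ → ℝ) (hc : Continuous g)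
    (h : ∀ t u s, (g (s + t + t + u) - g (s + t + t)) - 2 * (g (s + t + u) - g (s + t))
      + (g (s + u) - g s) = 0) :
    ∀ s, g s = ((g 1 + g (-1) - 2 * g 0) / 2) * s ^ 2 + ((g 1 - g (-1)) / 2) * s + g 0 := by
  -- each difference function is affine
  have key : ∀ u s, g (s + u) - g s =
      ((g (1 + u) - g 1) - (g u - g 0)) * s + (g u - g 0) := by
    intro u s
    have := affine_of_fd2 (fun s => g (s + u) - g s) (by fun_prop)
      (by intro t s; linarith [h t u s]) s
    rw [this]; ring_nf
  set B : ℝ → ℝ := fun u => (g (1 + u) - g 1) - (g u - g 0) with hB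
  set A : ℝ → ℝ := fun u => g u - g 0 with hA
  have keyAB : ∀ u s, g (s + u) - g s = B u * s + A u := key
  have hBadd : ∀ u v, B (u + v) = B u + B v := by
    intro u v
    have h0 := keyAB (u + v) 0
    have h1 := keyAB (u + v) 1
    have h0' := keyAB u 0
    have h1' := keyAB u 1
    have hv0 : g (0 + u + v) - g (0 + u) = B v * (0 + u) + A v := by
      have := keyAB v (0 + u); linarith [this]
    have hv1 : g (1 + u + v) - g (1 + u) = B v * (1 + u) + A v := by
      have := keyAB v (1 + u); linarith [this]
    have e0 : (0 : ℝ) + u + v = 0 + (u + v) := by ring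
    have e1 : (1 : ℝ) + u + v = 1 + (u + v) := by ring
    rw [e0] at hv0; rw [e1] at hv1
    nlinarith [h0, h1, h0', h1', hv0, hv1]
  have hBcont : Continuous B := by fun_prop
  have hBlin := lin_of_additive B hBcont hBadd
  have hAval : ∀ u v, A (u + v) = B v * u + A v + A u := by
    intro u v
    have h0 := keyAB (u + v) 0
    have hv0 : g (0 + u + v) - g (0 + u) = B v * (0 + u) + A v := by
      have := keyAB v (0 + u); linarith [this]
    have h0' := keyAB u 0
    have e0 : (0 : ℝ) + u + v = 0 + (u + v) := by ring
    rw [e0] at hv0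
    linarith [h0, hv0, h0']
  -- C is additive
  set C : ℝ → ℝ := fun u => A u - (B 1 / 2) * u ^ 2 with hC
  have hCadd : ∀ u v, C (u + v) = C u + C v := by
    intro u v
    have h1 := hAval u v
    have h2 := hBlin v
    simp only [hC]
    linear_combination h1 + u * h2
  have hCcont : Continuous C := by fun_prop
  have hClin := lin_of_additive C hCcont hCadd
  have gform : ∀ u, g u = g 0 + C 1 * u + (B 1 / 2) * u ^ 2 := by
    intro u
    have hthis := hClin u
    have hc1 : C 1 = g 1 - g 0 - B 1 / 2 * 1 ^ 2 := by simp [hC, hA]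
    simp only [hC, hA] at hthis
    linear_combination hthis + u * hc1
  intro s
  have e1 := gform 1
  have em1 := gform (-1)
  have es := gform s
  linear_combination es - ((s^2+s)/2) * e1 - ((s^2-s)/2) * em1

theorem statement10 (f : ℝ × ℤ → ℝ)
    (hcont : ∀ n : ℤ, Continuous fun s : ℝ => f (s, n))
    (hfd : ∀ (t : ℝ) (h y : ℝ × ℤ),
      fdiff ((t, 0) : ℝ × ℤ) (fdiff ((t, 0) : ℝ × ℤ) (fdiff h f)) y = 0)
    (heven : ∀ y : ℝ × ℤ, f (-y) = f y) :
    ∃ (σ : ℝ) (κ lam : ℤ → ℝ),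
      (∀ n : ℤ, κ (-n) = -κ n) ∧ (∀ n : ℤ, lam (-n) = lam n) ∧
      ∀ (s : ℝ) (n : ℤ), f (s, n) = σ * s ^ 2 + κ n * s + lam n := by
  have hev : ∀ (s : ℝ) (n : ℤ), f (-s, -n) = f (s, n) := by
    intro s n
    have := heven (s, n)
    simpa [Prod.neg_mk] using this
  refine ⟨(f (1, 0) + f (-1, 0) - 2 * f (0, 0)) / 2,
    fun n => (f (1, n) - f (-1, n)) / 2, fun n => f (0, n), ?_, ?_, ?_⟩
  · intro n
    have h1 := hev 1 n
    have h2 := hev (-1) n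
    rw [neg_neg] at h2
    simp only
    linarith
  · intro n
    have := hev 0 n
    rw [neg_zero] at this
    simp only [this]
  · intro s n
    -- each slice is quadratic
    have hslice : ∀ m : ℤ, ∀ x : ℝ, f (x, m) =
        ((f (1, m) + f (-1, m) - 2 * f (0, m)) / 2) * x ^ 2
        + ((f (1, m) - f (-1, m)) / 2) * x + f (0, m) := by
      intro m
      apply quad_of_fd3 (fun x => f (x, m)) (hcont m)
      intro t u x
      have := hfd t ((u, 0) : ℝ × ℤ) ((x, m) : ℝ × ℤ)
      simp only [fdiff, Prod.mk_add_mk, add_zero] at this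
      linarith
    -- the leading coefficients agree
    have hsame : (f (1, n) + f (-1, n) - 2 * f (0, n)) / 2
        = (f (1, 0) + f (-1, 0) - 2 * f (0, 0)) / 2 := by
      have haff := affine_of_fd2 (fun x => f (x, n) - f (x, 0)) ((hcont n).sub (hcont 0))
        (by
          intro t x
          have := hfd t ((0, n) : ℝ × ℤ) ((x, 0) : ℝ × ℤ)
          simp only [fdiff, Prod.mk_add_mk, add_zero, zero_add] at this
          linarith)
      have h1 := haff 1
      have hm1 := haff (-1)
      have h0 := haff 0
      linarith
    rw [hslice n s, hsame]
end
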